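/- arXiv:1101.4603 — 7 statements merged into one kernel-verified Lean document; each statement's English description precedes it below -/
import Mathlib

section
/- Every monomial x^a y^b (x^q)^c (x^{q+1})^d with a+b+c+d = s equals x^{(b+d)+q(c+d)} y^{(a+c)+q(a+b)}, and as (a,b,c,d) ranges over all quadruples of nonnegative integers with a+b+c+d = s, the resulting set of exponent pairs ((b+d)+q(c+d), (a+c)+q(a+b)) equals {(i+qj, (s-i)+q(s-j)) : 0 ≤ i, j ≤ s}. -/
/-!
Setting `i = b + d` and `j = c + d`, the relation `a + b + c + d = s` gives `a + c = s - i` and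
`a + b = s - j`, so the exponent pair is `(i + q j, (s - i) + q (s - j))`. Conversely every
`i, j ≤ s` arises, from `d = min i j`, `b = i - d`, `c = j - d`, `a = s - max i j`.
-/

theorem pow_mul_pow_mul_pow_mul_pow_eq {M : Type*} [CommMonoid M] (x y : M) (q a b c d : ℕ) :
    (y ^ (q + 1)) ^ a * (x * y ^ q) ^ b * (x ^ q * y) ^ c * (x ^ (q + 1)) ^ d
      = x ^ ((b + d) + q * (c + d)) * y ^ ((a + c) + q * (a + b)) := by
  simp only [mul_pow, ← pow_mul, mul_add, pow_add]
  ac_rfl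

theorem exists_add_add_add_eq_of_le {s i j : ℕ} (hi : i ≤ s) (hj : j ≤ s) :
    ∃ a b c d : ℕ, a + b + c + d = s ∧ b + d = i ∧ c + d = j :=
  ⟨s - max i j, i - min i j, j - min i j, min i j, by omega, by omega, by omega⟩

theorem stmt_1_general (q s : ℕ) :
    (∀ (M : Type) [CommMonoid M] (x y : M) (a b c d : ℕ), a + b + c + d = s →
      (y ^ (q + 1)) ^ a * (x * y ^ q) ^ b * (x ^ q * y) ^ c * (x ^ (q + 1)) ^ d
        = x ^ ((b + d) + q * (c + d)) * y ^ ((a + c) + q * (a + b))) ∧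
    {e : ℕ × ℕ | ∃ a b c d : ℕ, a + b + c + d = s ∧
        e = ((b + d) + q * (c + d), (a + c) + q * (a + b))} =
    {e : ℕ × ℕ | ∃ i j : ℕ, i ≤ s ∧ j ≤ s ∧ e = (i + q * j, (s - i) + q * (s - j))} := by
  refine ⟨fun M _ x y a b c d _ ↦ pow_mul_pow_mul_pow_mul_pow_eq x y q a b c d, ?_⟩
  ext e
  constructor
  · rintro ⟨a, b, c, d, hs, rfl⟩
    refine ⟨b + d, c + d, by omega, by omega, ?_⟩
    rw [show s - (b + d) = a + c by omega, show s - (c + d) = a + b by omega]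
  · rintro ⟨i, j, hi, hj, rfl⟩
    obtain ⟨a, b, c, d, hs, rfl, rfl⟩ := exists_add_add_add_eq_of_le hi hj
    refine ⟨a, b, c, d, hs, ?_⟩
    rw [show s - (b + d) = a + c by omega, show s - (c + d) = a + b by omega]

/-- Every monomial `(y^{q+1})^a (x y^q)^b (x^q y)^c (x^{q+1})^d` with `a+b+c+d = s`
equals `x^{(b+d)+q(c+d)} y^{(a+c)+q(a+b)}`, and the resulting set of exponent pairs
equals `{(i+qj, (s-i)+q(s-j)) : 0 ≤ i, j ≤ s}`. -/
theorem stmt_1 (q s : ℕ) (hq : 2 ≤ q) :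
    (∀ (M : Type) [CommMonoid M] (x y : M) (a b c d : ℕ), a + b + c + d = s →
      (y ^ (q + 1)) ^ a * (x * y ^ q) ^ b * (x ^ q * y) ^ c * (x ^ (q + 1)) ^ d
        = x ^ ((b + d) + q * (c + d)) * y ^ ((a + c) + q * (a + b))) ∧
    {e : ℕ × ℕ | ∃ a b c d : ℕ, a + b + c + d = s ∧
        e = ((b + d) + q * (c + d), (a + c) + q * (a + b))} =
    {e : ℕ × ℕ | ∃ i j : ℕ, i ≤ s ∧ j ≤ s ∧ e = (i + q * j, (s - i) + q * (s - j))} :=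
  stmt_1_general q s
end

section
/- For an integer 0 ≤ s < q, the evaluation code C_H(s) on the hyperbolic quadric H ⊂ P³ over F_q (given by x₀x₃ − x₁x₂ = 0) has length (q+1)², dimension (s+1)², and minimum distance (q−s+1)². -/
/-!
The Segre map `(u, v) ↦ segre (homCoords u) (homCoords v)` is a bijection `P¹ × P¹ → H`, and it
pulls a form of degree `s` back to a form of bidegree `(s, s)`. Hence `C_H(s)` is, up to this
relabelling of coordinates, the product code `RS ⊗ RS`, where `RS` is the doubly extended
Reed–Solomon code of polynomials of degree `≤ s` evaluated on `P¹(F_q) = F_q ∪ {∞}`, which has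
dimension `s + 1` and minimum distance `q - s + 1`. A product code has the product dimension, and
its minimum distance is the product too: a nonzero codeword has a nonzero row, of weight at least
`d`, and each of the at least `d` columns through the support of that row is a nonzero codeword of
weight at least `d`. The bound is attained by `w ⊗ w` for a minimum-weight `w`.
-/

open Polynomial Module Submodule Finset

section HammingNorm

variable {K α β : Type*} [Fintype α] [Fintype β] [DecidableEq K]

theorem hammingNorm_eq_sum_hammingNorm_col [Zero K] (M : α × β → K) :
    hammingNorm M = ∑ b, hammingNorm fun a => M (a, b) := by
  simp only [hammingNorm, card_filter, Fintype.sum_prod_type_right]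

theorem hammingNorm_mul_fst_snd [MulZeroClass K] [NoZeroDivisors K] (f : α → K)
    (g : β → K) :
    hammingNorm (fun x : α × β => f x.1 * g x.2) = hammingNorm f * hammingNorm g := by
  simp only [hammingNorm, ← card_product, ← filter_product, univ_product_univ, ne_eq,
    mul_eq_zero, not_or]

theorem hammingNorm_option [Zero K] (w : Option α → K) :
    hammingNorm w = (if w none = 0 then 0 else 1) + hammingNorm fun a => w (some a) := by
  simp only [hammingNorm, card_filter, Fintype.sum_option, ne_eq, ite_not]

end HammingNorm

theorem ncard_setOf_ne_zero_eq_hammingNorm_comp {ι κ K : Type*} [Fintype ι] [Zero K]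
    [DecidableEq K] (e : ι ≃ κ) (c : κ → K) :
    {p | c p ≠ 0}.ncard = hammingNorm (c ∘ e) := by
  rw [hammingNorm, ← Set.ncard_coe_finset, ← Set.ncard_image_of_injective _ e.injective]
  congr 1
  ext p
  simp

section TensorCode

variable {K α β : Type*} [Field K]

def tensorCode (A : Submodule K (α → K)) (B : Submodule K (β → K)) :
    Submodule K (α × β → K) :=
  A.map (LinearMap.funLeft K K Prod.fst) * B.map (LinearMap.funLeft K K Prod.snd)

variable {A : Submodule K (α → K)} {B : Submodule K (β → K)}

theorem mul_mem_tensorCode {f : α → K} {g : β → K} (hf : f ∈ A) (hg : g ∈ B) :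
    (fun x : α × β => f x.1 * g x.2) ∈ tensorCode A B :=
  mul_mem_mul (mem_map_of_mem hf) (mem_map_of_mem hg)

theorem row_mem_of_mem_tensorCode {M : α × β → K} (hM : M ∈ tensorCode A B) (a : α) :
    (fun b => M (a, b)) ∈ B := by
  refine Submodule.mul_induction_on hM (fun m hm n hn => ?_) fun _ _ => B.add_mem
  obtain ⟨f, -, rfl⟩ := mem_map.mp hm
  obtain ⟨g, hg, rfl⟩ := mem_map.mp hn
  exact B.smul_mem (f a) hg

theorem col_mem_of_mem_tensorCode {M : α × β → K} (hM : M ∈ tensorCode A B) (b : β) :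
    (fun a => M (a, b)) ∈ A := by
  refine Submodule.mul_induction_on hM (fun m hm n hn => ?_) fun _ _ => A.add_mem
  obtain ⟨f, hf, rfl⟩ := mem_map.mp hm
  obtain ⟨g, -, rfl⟩ := mem_map.mp hn
  convert A.smul_mem (g b) hf using 1
  exact funext fun a => mul_comm (f a) (g b)

theorem tensorCode_span_range {ι κ : Type*} (f : ι → α → K) (g : κ → β → K) :
    tensorCode (span K (Set.range f)) (span K (Set.range g)) =
      span K (Set.range fun p : ι × κ => fun x : α × β => f p.1 x.1 * g p.2 x.2) := by
  rw [tensorCode, map_span, map_span, span_mul_span, ← Set.range_comp, ← Set.range_comp,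
    ← Set.image2_mul, Set.image2_range]
  rfl

theorem LinearIndependent.prod_mul {ι κ : Type*} [Fintype ι] [Fintype κ] {f : ι → α → K}
    {g : κ → β → K} (hf : LinearIndependent K f) (hg : LinearIndependent K g) :
    LinearIndependent K fun p : ι × κ => fun x : α × β => f p.1 x.1 * g p.2 x.2 := by
  rw [Fintype.linearIndependent_iff] at hf hg ⊢
  intro c hc ⟨i, j⟩
  have hcol : ∀ a j, ∑ i, c (i, j) * f i a = 0 := fun a => hg _ <| funext fun b => by
    simpa [Fintype.sum_prod_type_right, Finset.sum_mul, mul_assoc, mul_left_comm]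
      using congrFun hc (a, b)
  exact hf (fun i => c (i, j)) (funext fun a => by simpa using hcol a j) i

theorem finrank_tensorCode [Finite α] [Finite β] :
    finrank K (tensorCode A B) = finrank K A * finrank K B := by
  let bA := Module.finBasis K A
  let bB := Module.finBasis K B
  have hA : span K (Set.range (A.subtype ∘ bA)) = A := by
    rw [Set.range_comp, ← map_span, bA.span_eq, Submodule.map_top, range_subtype]
  have hB : span K (Set.range (B.subtype ∘ bB)) = B := by
    rw [Set.range_comp, ← map_span, bB.span_eq, Submodule.map_top, range_subtype]
  have hli := (bA.linearIndependent.map' A.subtype A.ker_subtype).prod_mul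
    (bB.linearIndependent.map' B.subtype B.ker_subtype)
  calc finrank K (tensorCode A B)
      = finrank K (span K (Set.range fun p : _ × _ => fun x : α × β =>
          (A.subtype ∘ bA) p.1 x.1 * (B.subtype ∘ bB) p.2 x.2)) := by
        rw [← tensorCode_span_range, hA, hB]
    _ = finrank K A * finrank K B := by rw [finrank_span_eq_card hli]; simp

variable [Fintype α] [Fintype β] [DecidableEq K]

theorem mul_le_hammingNorm_of_mem_tensorCode {dA dB : ℕ}
    (hA : ∀ w ∈ A, w ≠ 0 → dA ≤ hammingNorm w) (hB : ∀ w ∈ B, w ≠ 0 → dB ≤ hammingNorm w)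
    {M : α × β → K} (hM : M ∈ tensorCode A B) (hM0 : M ≠ 0) : dA * dB ≤ hammingNorm M := by
  obtain ⟨⟨a, b⟩, hab⟩ := Function.ne_iff.mp hM0
  have hrow : dB ≤ #{b' | M (a, b') ≠ 0} :=
    hB _ (row_mem_of_mem_tensorCode hM a) fun h => hab (congrFun h b)
  calc dA * dB ≤ ∑ b' ∈ {b' | M (a, b') ≠ 0}, dA := by
        rw [sum_const, smul_eq_mul, mul_comm]; gcongr
    _ ≤ ∑ b' ∈ {b' | M (a, b') ≠ 0}, hammingNorm fun a' => M (a', b') :=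
        sum_le_sum fun b' hb' => hA _ (col_mem_of_mem_tensorCode hM b')
          fun h => (mem_filter.mp hb').2 (congrFun h a)
    _ ≤ ∑ b', hammingNorm fun a' => M (a', b') := sum_le_sum_of_subset (subset_univ _)
    _ = hammingNorm M := (hammingNorm_eq_sum_hammingNorm_col M).symm

end TensorCode

theorem Polynomial.natDegree_le_of_mem_degreeLT {R : Type*} [Semiring R] {p : R[X]} {n : ℕ}
    (hp : p ∈ degreeLT R (n + 1)) : p.natDegree ≤ n := by
  rw [mem_degreeLT] at hp
  exact natDegree_le_iff_degree_le.mpr (Order.le_of_lt_succ (by exact_mod_cast hp))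

theorem Polynomial.card_sub_natDegree_le_hammingNorm_eval {F : Type*} [Field F] [Fintype F]
    [DecidableEq F] {p : F[X]} (hp : p ≠ 0) :
    Fintype.card F - p.natDegree ≤ hammingNorm fun a => p.eval a := by
  have hroots : #{a | p.eval a = 0} ≤ p.natDegree :=
    card_le_degree_of_subset_roots fun a ha => by simpa [mem_roots hp] using ha
  have := card_filter_add_card_filter_not (s := univ) fun a => p.eval a = 0
  rw [card_univ] at this
  simp only [hammingNorm, ne_eq]
  omega

section ReedSolomon

variable {F : Type*} [Field F]

-- `none` is the point at infinity `(0 : 1)`, where the degree-`s` homogenization of `p` takes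
-- the value `p.coeff s`.
noncomputable def evalP1 (s : ℕ) : F[X] →ₗ[F] Option F → F :=
  LinearMap.pi fun u => u.elim (lcoeff F s) leval

@[simp] theorem evalP1_none (s : ℕ) (p : F[X]) : evalP1 s p none = p.coeff s := rfl

@[simp] theorem evalP1_some (s : ℕ) (p : F[X]) (a : F) : evalP1 s p (some a) = p.eval a := rfl

variable (F) in
noncomputable def reedSolomon (s : ℕ) : Submodule F (Option F → F) :=
  (degreeLT F (s + 1)).map (evalP1 s)

theorem reedSolomon_eq_span (s : ℕ) :
    reedSolomon F s = span F (Set.range fun i : Fin (s + 1) => evalP1 s (X ^ (i : ℕ))) := by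
  have h : span F (Set.range ((degreeLT F (s + 1)).subtype ∘ degreeLT.basis F (s + 1))) =
      degreeLT F (s + 1) := by
    rw [Set.range_comp, ← map_span, (degreeLT.basis F (s + 1)).span_eq, Submodule.map_top,
      range_subtype]
  rw [reedSolomon, ← h, map_span, ← Set.range_comp]
  congr! with i
  simp

variable [Fintype F]

theorem injective_evalP1_domRestrict {s : ℕ} (hs : s < Fintype.card F) :
    Function.Injective ((evalP1 s).domRestrict (degreeLT F (s + 1))) := by
  rw [← LinearMap.ker_eq_bot, LinearMap.ker_eq_bot']
  rintro ⟨p, hp⟩ h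
  ext1
  refine eq_zero_of_natDegree_lt_card_of_eval_eq_zero p Function.injective_id
    (fun a => congrFun h (some a)) ?_
  exact (natDegree_le_of_mem_degreeLT hp).trans_lt hs

theorem finrank_reedSolomon {s : ℕ} (hs : s < Fintype.card F) :
    finrank F (reedSolomon F s) = s + 1 := by
  rw [reedSolomon, ← LinearMap.range_domRestrict,
    LinearMap.finrank_range_of_inj (injective_evalP1_domRestrict hs),
    finrank_eq_card_basis (degreeLT.basis F (s + 1)), Fintype.card_fin]

variable [DecidableEq F]

theorem card_sub_add_one_le_hammingNorm_of_mem_reedSolomon {s : ℕ} (hs : s < Fintype.card F)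
    {w : Option F → F} (hw : w ∈ reedSolomon F s) (hw0 : w ≠ 0) :
    Fintype.card F - s + 1 ≤ hammingNorm w := by
  obtain ⟨p, hp, rfl⟩ := mem_map.mp hw
  have hp0 : p ≠ 0 := by rintro rfl; exact hw0 (map_zero _)
  have hdeg := natDegree_le_of_mem_degreeLT hp
  have heval := card_sub_natDegree_le_hammingNorm_eval hp0
  rw [hammingNorm_option]
  simp only [evalP1_none, evalP1_some]
  -- The point at infinity counts iff `deg p = s`; otherwise `p` has fewer than `s` roots.
  by_cases hs0 : p.coeff s = 0 <;> simp only [hs0, ↓reduceIte]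
  · have : p.natDegree ≠ s := fun h => hp0 (leadingCoeff_eq_zero.mp (by rwa [leadingCoeff, h]))
    omega
  · omega

theorem exists_mem_reedSolomon_hammingNorm_eq {s : ℕ} (hs : s < Fintype.card F) :
    ∃ w ∈ reedSolomon F s, hammingNorm w = Fintype.card F - s + 1 := by
  obtain ⟨t, -, ht⟩ := exists_subset_card_eq (s := (univ : Finset F)) (by simpa using hs.le)
  have hdeg : (Lagrange.nodal t id).natDegree = s := by rw [Lagrange.natDegree_nodal, ht]
  refine ⟨evalP1 s (Lagrange.nodal t id), mem_map_of_mem ?_, ?_⟩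
  · rw [mem_degreeLT, Lagrange.degree_nodal, ht]
    exact_mod_cast Nat.lt_succ_self s
  have hzeros : hammingNorm (fun a => (Lagrange.nodal t id).eval a) = Fintype.card F - s := by
    rw [hammingNorm, ← ht, ← card_compl]
    congr 1
    ext a
    by_cases ha : a ∈ t
    · simpa [ha] using Lagrange.eval_nodal_at_node (v := id) ha
    · simpa [ha] using Lagrange.eval_nodal_not_at_node (v := id) fun b hb h => ha (by rwa [h])
  rw [hammingNorm_option, evalP1_none, ← hdeg, Lagrange.nodal_monic.coeff_natDegree, hdeg]
  simp only [evalP1_some, hzeros, one_ne_zero, ↓reduceIte]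
  omega

end ReedSolomon

section Segre

variable {F : Type*} [Field F]

def homCoords : Option F → Fin 2 → F
  | some a => ![1, a]
  | none => ![0, 1]

def segre (x y : Fin 2 → F) : Fin 4 → F :=
  ![x 0 * y 0, x 0 * y 1, x 1 * y 0, x 1 * y 1]

-- Reducible, so that it unifies with the set of points written out in `stmt_4`.
variable (F) in
abbrev quadric : Set (Fin 4 → F) :=
  {p | (∃ i, p i = 1 ∧ ∀ j < i, p j = 0) ∧ p 0 * p 3 = p 1 * p 2}

theorem segre_mem_quadric (u v : Option F) :
    segre (homCoords u) (homCoords v) ∈ quadric F := by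
  refine ⟨?_, by simp [segre]; ring⟩
  rcases u with _ | a <;> rcases v with _ | b
  · exact ⟨3, by simp [segre, homCoords], fun j hj => by
      fin_cases j <;> simp_all [segre, homCoords]⟩
  · exact ⟨2, by simp [segre, homCoords], fun j hj => by
      fin_cases j <;> simp_all [segre, homCoords]⟩
  · exact ⟨1, by simp [segre, homCoords], fun j hj => by
      fin_cases j <;> simp_all [segre, homCoords]⟩
  · exact ⟨0, by simp [segre, homCoords], fun j hj => (Fin.not_lt_zero j hj).elim⟩

theorem segre_homCoords_injective :
    Function.Injective fun x : Option F × Option F => segre (homCoords x.1) (homCoords x.2) := by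
  rintro ⟨u, v⟩ ⟨u', v'⟩ h
  have h := congrFun h
  have h0 := h 0; have h1 := h 1; have h2 := h 2; have h3 := h 3
  rcases u with _ | a <;> rcases v with _ | b <;> rcases u' with _ | a' <;>
    rcases v' with _ | b' <;> simp_all [segre, homCoords]

theorem exists_segre_homCoords_eq {p : Fin 4 → F} (hp : p ∈ quadric F) :
    ∃ u v : Option F, segre (homCoords u) (homCoords v) = p := by
  obtain ⟨⟨i, hi, hlt⟩, hq⟩ := hp
  fin_cases i
  · exact ⟨some (p 2), some (p 1), funext fun j => by
      fin_cases j <;> simp_all [segre, homCoords, mul_comm]⟩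
  · have h0 := hlt 0 (by decide)
    exact ⟨some (p 3), none, funext fun j => by fin_cases j <;> simp_all [segre, homCoords]⟩
  · have h0 := hlt 0 (by decide); have h1 := hlt 1 (by decide)
    exact ⟨none, some (p 3), funext fun j => by fin_cases j <;> simp_all [segre, homCoords]⟩
  · have h0 := hlt 0 (by decide); have h1 := hlt 1 (by decide)
    have h2 := hlt 2 (by decide)
    exact ⟨none, none, funext fun j => by fin_cases j <;> simp_all [segre, homCoords]⟩

noncomputable def segreEquiv : Option F × Option F ≃ quadric F :=
  Equiv.ofBijective
    (fun x => ⟨segre (homCoords x.1) (homCoords x.2), segre_mem_quadric x.1 x.2⟩)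
    ⟨fun _ _ h => segre_homCoords_injective (congrArg Subtype.val h), fun ⟨_, hp⟩ =>
      (exists_segre_homCoords_eq hp).elim fun u ⟨v, huv⟩ => ⟨(u, v), Subtype.ext huv⟩⟩

theorem evalP1_X_pow {s i : ℕ} (hi : i ≤ s) (u : Option F) :
    evalP1 s (X ^ i) u = homCoords u 0 ^ (s - i) * homCoords u 1 ^ i := by
  rcases u with _ | a
  · rcases hi.eq_or_lt with rfl | hlt
    · simp [homCoords]
    · simp [homCoords, coeff_X_pow, hlt.ne', Nat.sub_ne_zero_of_lt hlt]
  · simp [homCoords]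

theorem eval_segre_monomial {s : ℕ} {d : Fin 4 →₀ ℕ} (hd : d.degree = s)
    (x y : Fin 2 → F) :
    MvPolynomial.eval (segre x y) (MvPolynomial.monomial d 1) =
      (x 0 ^ (s - (d 2 + d 3)) * x 1 ^ (d 2 + d 3)) *
        (y 0 ^ (s - (d 1 + d 3)) * y 1 ^ (d 1 + d 3)) := by
  rw [Finsupp.degree_eq_sum, Fin.sum_univ_four] at hd
  rw [MvPolynomial.eval_monomial, Finsupp.prod_fintype _ _ fun _ => pow_zero _,
    Fin.prod_univ_four, show s - (d 2 + d 3) = d 0 + d 1 by omega,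
    show s - (d 1 + d 3) = d 0 + d 2 by omega]
  simp only [segre, one_mul, Matrix.cons_val]
  ring

theorem span_eval_segre_eq_tensorCode (s : ℕ) :
    span F {w | ∃ f : MvPolynomial (Fin 4) F, f.IsHomogeneous s ∧ w = fun x : Option F × Option F =>
        MvPolynomial.eval (segre (homCoords x.1) (homCoords x.2)) f} =
      tensorCode (reedSolomon F s) (reedSolomon F s) := by
  rw [reedSolomon_eq_span, tensorCode_span_range]
  apply le_antisymm
  · rw [span_le]
    rintro _ ⟨f, hf, rfl⟩
    have hsum : (fun x : Option F × Option F =>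
        MvPolynomial.eval (segre (homCoords x.1) (homCoords x.2)) f) =
          ∑ d ∈ f.support, f.coeff d • fun x : Option F × Option F =>
            MvPolynomial.eval (segre (homCoords x.1) (homCoords x.2))
              (MvPolynomial.monomial d 1) := by
      ext x
      simp [Finset.sum_apply, MvPolynomial.eval_eq]
    rw [hsum]
    refine sum_mem fun d hd => smul_mem _ _ (subset_span ?_)
    have hd : d.degree = s := by
      rw [Finsupp.degree_eq_weight_one]; exact hf (MvPolynomial.mem_support_iff.mp hd)
    have hd_sum := hd
    rw [Finsupp.degree_eq_sum, Fin.sum_univ_four] at hd_sum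
    refine ⟨(⟨d 2 + d 3, by omega⟩, ⟨d 1 + d 3, by omega⟩), funext fun x => ?_⟩
    simp only [eval_segre_monomial hd, evalP1_X_pow (by omega : d 2 + d 3 ≤ s),
      evalP1_X_pow (by omega : d 1 + d 3 ≤ s)]
  · rw [span_le]
    rintro _ ⟨⟨i, j⟩, rfl⟩
    -- the exponent of a degree-`s` monomial with `d 2 + d 3 = i` and `d 1 + d 3 = j`
    let d : Fin 4 →₀ ℕ := Finsupp.equivFunOnFinite.symm
      ![s - max i j, j - min i j, i - min i j, min i j]
    have hd : d.degree = s := by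
      rw [Finsupp.degree_eq_sum, Fin.sum_univ_four]
      simp [d]
      omega
    refine subset_span ⟨MvPolynomial.monomial d 1, MvPolynomial.isHomogeneous_monomial 1 hd,
      funext fun x => ?_⟩
    have hi : d 2 + d 3 = i := by simp [d]
    have hj : d 1 + d 3 = j := by simp [d]
    rw [eval_segre_monomial hd, hi, hj]
    exact congr($(evalP1_X_pow i.is_le x.1) * $(evalP1_X_pow j.is_le x.2))

variable (F) in
def quadricCode (s : ℕ) : Submodule F (quadric F → F) :=
  span F {w | ∃ f : MvPolynomial (Fin 4) F, f.IsHomogeneous s ∧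
    w = fun p : quadric F => MvPolynomial.eval p.1 f}

theorem map_quadricCode_eq_tensorCode (s : ℕ) :
    (quadricCode F s).map (LinearEquiv.funCongrLeft F F segreEquiv).toLinearMap =
      tensorCode (reedSolomon F s) (reedSolomon F s) := by
  rw [← span_eval_segre_eq_tensorCode, quadricCode, map_span]
  congr 1
  ext w
  constructor
  · rintro ⟨_, ⟨f, hf, rfl⟩, rfl⟩
    exact ⟨f, hf, rfl⟩
  · rintro ⟨f, hf, rfl⟩
    exact ⟨_, ⟨f, hf, rfl⟩, rfl⟩

end Segre

/-- For `0 ≤ s < q`, the evaluation code `C_H(s)` on the hyperbolic quadric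
`H : x₀x₃ = x₁x₂` in `P³` over `F_q` has length `(q+1)²`, dimension `(s+1)²`
and minimum distance `(q-s+1)²`. -/
theorem stmt_4 (F : Type) [Field F] [Fintype F] (q s : ℕ)
    (hq : Fintype.card F = q) (hs : s < q) :
    -- rational points of H, with normalized coordinates
    let H : Set (Fin 4 → F) := {p | (∃ i, p i = 1 ∧ ∀ j < i, p j = 0) ∧
      p 0 * p 3 = p 1 * p 2}
    -- the code: evaluations of homogeneous forms of degree s at the points of H
    let C : Submodule F (H → F) := Submodule.span F
      {w | ∃ f : MvPolynomial (Fin 4) F, f.IsHomogeneous s ∧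
        w = fun p : H => MvPolynomial.eval p.1 f}
    let wt : (H → F) → ℕ := fun c => {p | c p ≠ 0}.ncard
    H.ncard = (q + 1) ^ 2 ∧
    Module.finrank F C = (s + 1) ^ 2 ∧
    (∃ c ∈ C, c ≠ 0 ∧ wt c = (q - s + 1) ^ 2) ∧
    (∀ c ∈ C, c ≠ 0 → (q - s + 1) ^ 2 ≤ wt c) := by
  classical
  subst hq
  intro H C wt
  let Φ := LinearEquiv.funCongrLeft F F (segreEquiv (F := F))
  have hC : C.map Φ.toLinearMap = tensorCode (reedSolomon F s) (reedSolomon F s) :=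
    map_quadricCode_eq_tensorCode s
  have hwt (c : H → F) : wt c = hammingNorm (Φ c) :=
    ncard_setOf_ne_zero_eq_hammingNorm_comp segreEquiv c
  have hRS (w) := card_sub_add_one_le_hammingNorm_of_mem_reedSolomon (w := w) hs
  refine ⟨?_, ?_, ?_, fun c hc hc0 => ?_⟩
  · rw [← Nat.card_coe_set_eq, ← Nat.card_congr segreEquiv]
    simp [sq]
  · rw [← LinearEquiv.finrank_map_eq Φ, hC, finrank_tensorCode, finrank_reedSolomon hs, sq]
  · obtain ⟨w, hw, hw_norm⟩ := exists_mem_reedSolomon_hammingNorm_eq hs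
    obtain ⟨c, hc, hcw⟩ := mem_map.mp (hC ▸ mul_mem_tensorCode hw hw)
    have hwtc : wt c = (Fintype.card F - s + 1) ^ 2 := by
      rw [hwt, show Φ c = _ from hcw, hammingNorm_mul_fst_snd, hw_norm, sq]
    refine ⟨c, hc, ?_, hwtc⟩
    rintro rfl
    exact (pow_pos (Nat.succ_pos _) 2).ne (by simpa [wt] using hwtc)
  · rw [hwt, sq]
    exact mul_le_hammingNorm_of_mem_tensorCode hRS hRS (hC ▸ mem_map_of_mem hc)
      (Φ.map_ne_zero_iff.mpr hc0)
end

section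
/- Let X be the curve cut out on the hyperbolic quadric H ⊂ P³ over F_q by a surface of degree s < q not containing H. Then the number of F_q-rational points of X is at most 2s(q+1) − s². -/
/-!
Pull `f` back along the Segre isomorphism `P¹ × P¹ ≅ H`. The result `G` is a form of
bidegree `(s, s)`, and it is nonzero because the kernel of the pullback is exactly the ideal
of `H`. For each `x ∈ P¹(F_q)`, the form `G(x, ·)` either vanishes identically or has at most
`s` zeros. The first case happens for at most `s` values of `x`, namely zeros of a nonzero
coefficient of `G`. With `t ≤ s` such exceptional rows, `G` has at most
`t(q+1) + (q+1-t)s ≤ 2s(q+1) - s²` zeros.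
-/

open MvPolynomial Finset

lemma MvPolynomial.IsHomogeneous.sum_exps_fin_two {R : Type*} [CommSemiring R]
    {φ : MvPolynomial (Fin 2) R} {s : ℕ} (hφ : φ.IsHomogeneous s) {n : Fin 2 →₀ ℕ}
    (hn : n ∈ φ.support) : n 0 + n 1 = s := by
  simpa [Finsupp.weight_apply, Finsupp.sum_fintype, Fin.sum_univ_two] using
    hφ (mem_support_iff.mp hn)

lemma MvPolynomial.IsHomogeneous.sum_exps_fin_four {R : Type*} [CommSemiring R]
    {φ : MvPolynomial (Fin 4) R} {s : ℕ} (hφ : φ.IsHomogeneous s) {m : Fin 4 →₀ ℕ}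
    (hm : m ∈ φ.support) : m 0 + m 1 + m 2 + m 3 = s := by
  simpa [Finsupp.weight_apply, Finsupp.sum_fintype, Fin.sum_univ_four] using
    hφ (mem_support_iff.mp hm)

lemma sum_le_two_mul_mul_sub_sq {ι : Type*} [Fintype ι] (r : ι → ℕ) (bad : Finset ι)
    {s : ℕ} (hs : s ≤ Fintype.card ι) (hr : ∀ i, r i ≤ Fintype.card ι)
    (hgood : ∀ i ∉ bad, r i ≤ s) (hbad : #bad ≤ s) :
    ∑ i, r i ≤ 2 * s * Fintype.card ι - s ^ 2 := by
  classical
  set N := Fintype.card ι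
  have hbound : ∀ i, r i ≤ s + if i ∈ bad then N - s else 0 := fun i => by
    split_ifs with hi
    · have := hr i; omega
    · simpa using hgood i hi
  calc ∑ i, r i ≤ ∑ i, (s + if i ∈ bad then N - s else 0) := sum_le_sum fun i _ => hbound i
    _ = N * s + #bad * (N - s) := by
      rw [sum_add_distrib, sum_const, card_univ, smul_eq_mul, sum_ite_mem, univ_inter, sum_const,
        smul_eq_mul]
    _ ≤ N * s + s * (N - s) := by gcongr
    _ = 2 * s * N - s ^ 2 := by
      obtain ⟨d, hd⟩ := Nat.exists_eq_add_of_le hs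
      rw [hd, Nat.add_sub_cancel_left]
      exact (Nat.sub_eq_of_eq_add (by ring)).symm

section BinaryForms

variable {K : Type*} [CommRing K]

/-- Normalized coordinates of the points of `P¹(K)`, with `none` the point at infinity. -/
def projLinePoint (x : Option K) : Fin 2 → K :=
  x.elim ![0, 1] fun t => ![1, t]

noncomputable def dehomogenize (B : MvPolynomial (Fin 2) K) : Polynomial K :=
  ∑ n ∈ B.support, Polynomial.C (B.coeff n) * Polynomial.X ^ n 1

lemma eval_dehomogenize (B : MvPolynomial (Fin 2) K) (t : K) :
    (dehomogenize B).eval t = eval (projLinePoint (some t)) B := by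
  simp [dehomogenize, Polynomial.eval_finsetSum, eval_eq', Fin.prod_univ_two, projLinePoint]

variable {s : ℕ} {B : MvPolynomial (Fin 2) K}

lemma natDegree_dehomogenize_le (hB : B.IsHomogeneous s) : (dehomogenize B).natDegree ≤ s :=
  Polynomial.natDegree_sum_le_of_forall_le _ _ fun n hn =>
    (Polynomial.natDegree_C_mul_X_pow_le _ _).trans (by have := hB.sum_exps_fin_two hn; omega)

lemma coeff_dehomogenize (hB : B.IsHomogeneous s) {n : Fin 2 →₀ ℕ} (hn : n ∈ B.support) :
    (dehomogenize B).coeff (n 1) = B.coeff n := by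
  simp only [dehomogenize, Polynomial.finsetSum_coeff, Polynomial.coeff_C_mul_X_pow]
  refine (sum_eq_single n (fun n' hn' hne => if_neg fun h => hne ?_) (absurd hn)).trans
    (if_pos rfl)
  have := hB.sum_exps_fin_two hn
  have := hB.sum_exps_fin_two hn'
  ext i; fin_cases i <;> simp <;> omega

lemma coeff_dehomogenize_self (hB : B.IsHomogeneous s) :
    (dehomogenize B).coeff s = eval (projLinePoint none) B := by
  simp only [dehomogenize, Polynomial.finsetSum_coeff, Polynomial.coeff_C_mul_X_pow, eval_eq',
    Fin.prod_univ_two, projLinePoint]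
  refine sum_congr rfl fun n hn => ?_
  have := hB.sum_exps_fin_two hn
  by_cases h : n 1 = s
  · simp [h, show n 0 = 0 by omega]
  · simp [Ne.symm h, show n 0 ≠ 0 by omega]

lemma dehomogenize_ne_zero (hB : B.IsHomogeneous s) (h0 : B ≠ 0) : dehomogenize B ≠ 0 := by
  obtain ⟨n, hn⟩ := ne_zero_iff.mp h0
  intro h
  apply hn
  rw [← coeff_dehomogenize hB (mem_support_iff.mpr hn), h, Polynomial.coeff_zero]

lemma card_zeros_le_of_isHomogeneous [IsDomain K] [Fintype K] [DecidableEq K] (hB : B.IsHomogeneous s)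
    (h0 : B ≠ 0) : #{x : Option K | eval (projLinePoint x) B = 0} ≤ s := by
  have hp := dehomogenize_ne_zero hB h0
  have hdeg := natDegree_dehomogenize_le hB
  have hroots : #{t : K | (dehomogenize B).eval t = 0} ≤ (dehomogenize B).natDegree :=
    Polynomial.card_le_degree_of_subset_roots fun t ht => by
      simpa [Polynomial.mem_roots hp] using ht
  rw [card_filter, Fintype.sum_option]
  simp only [← eval_dehomogenize, ← coeff_dehomogenize_self hB, ← card_filter]
  -- the point at infinity is a zero exactly when `dehomogenize B` has degree `< s`
  split_ifs with hinf
  · have : (dehomogenize B).natDegree ≠ s := fun h =>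
      hp (Polynomial.leadingCoeff_eq_zero.mp (by rwa [Polynomial.leadingCoeff, h]))
    omega
  · omega

end BinaryForms

section Segre

variable {R : Type*} [CommRing R]

/-- Pullback along the Segre embedding `((x₀ : x₁), (y₀ : y₁)) ↦ (x₀y₀ : x₀y₁ : x₁y₀ : x₁y₁)`:
the coefficients carry the variables `x`, the outer variables are `y`. -/
noncomputable def segrePullback :
    MvPolynomial (Fin 4) R →ₐ[R] MvPolynomial (Fin 2) (MvPolynomial (Fin 2) R) :=
  aeval ![C (X 0) * X 0, C (X 0) * X 1, C (X 1) * X 0, C (X 1) * X 1]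

def segrePoint (v w : Fin 2 → R) : Fin 4 → R :=
  ![v 0 * w 0, v 0 * w 1, v 1 * w 0, v 1 * w 1]

lemma eval_map_eval_segrePullback (f : MvPolynomial (Fin 4) R) (v w : Fin 2 → R) :
    eval w (map (eval v) (segrePullback f)) = eval (segrePoint v w) f := by
  induction f using MvPolynomial.induction_on with
  | C a => simp [segrePullback]
  | add p r hp hr => simp only [map_add, hp, hr]
  | mul_X p i hp =>
    rw [map_mul, map_mul, map_mul, map_mul, hp, segrePullback, aeval_X, eval_X]
    fin_cases i <;> simp [segrePoint]

lemma segrePullback_quadric :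
    segrePullback (X 0 * X 3 - X 1 * X 2 : MvPolynomial (Fin 4) R) = 0 := by
  simp only [segrePullback, map_sub, map_mul, aeval_X, Matrix.cons_val_zero, Matrix.cons_val,
    Matrix.cons_val_one]
  ring

noncomputable def segreExpX (m : Fin 4 →₀ ℕ) : Fin 2 →₀ ℕ :=
  Finsupp.single 0 (m 0 + m 1) + Finsupp.single 1 (m 2 + m 3)

noncomputable def segreExpY (m : Fin 4 →₀ ℕ) : Fin 2 →₀ ℕ :=
  Finsupp.single 0 (m 0 + m 2) + Finsupp.single 1 (m 1 + m 3)

lemma segrePullback_monomial (m : Fin 4 →₀ ℕ) (c : R) :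
    segrePullback (monomial m c) = monomial (segreExpY m) (monomial (segreExpX m) c) := by
  have hgen : ∀ i j : Fin 2, (C (X i) * X j : MvPolynomial (Fin 2) (MvPolynomial (Fin 2) R)) =
      monomial (Finsupp.single j 1) (monomial (Finsupp.single i 1) 1) := fun i j => by
    rw [X, X, C_mul_monomial, mul_one]
  rw [segrePullback, aeval_monomial, Finsupp.prod_fintype _ _ (fun _ => pow_zero _),
    Fin.prod_univ_four]
  simp only [Matrix.cons_val_zero, Matrix.cons_val_one, Matrix.cons_val_two, Matrix.cons_val_three,
    Matrix.head_cons, Matrix.tail_cons, hgen, monomial_pow, monomial_mul, one_pow, mul_one]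
  rw [MvPolynomial.algebraMap_apply, C_mul_monomial, MvPolynomial.algebraMap_apply, C_mul_monomial,
    mul_one]
  congr 2
  · ext i; fin_cases i <;> simp [segreExpY]
  · congr 1; ext i; fin_cases i <;> simp [segreExpX, add_assoc]

lemma coeff_segrePullback (f : MvPolynomial (Fin 4) R) (b : Fin 2 →₀ ℕ) :
    (segrePullback f).coeff b =
      ∑ m ∈ f.support with segreExpY m = b, monomial (segreExpX m) (f.coeff m) := by
  conv_lhs => rw [f.as_sum]
  simp only [map_sum, segrePullback_monomial, coeff_sum, coeff_monomial, sum_filter]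

lemma isHomogeneous_segrePullback {f : MvPolynomial (Fin 4) R} {s : ℕ} (hf : f.IsHomogeneous s) :
    (segrePullback f).IsHomogeneous s := by
  rw [segrePullback, ← one_mul s]
  exact hf.aeval _ fun i => by fin_cases i <;> exact isHomogeneous_C_mul_X _ _

lemma isHomogeneous_coeff_segrePullback {f : MvPolynomial (Fin 4) R} {s : ℕ}
    (hf : f.IsHomogeneous s) (b : Fin 2 →₀ ℕ) :
    ((segrePullback f).coeff b).IsHomogeneous s := by
  rw [coeff_segrePullback]
  refine IsHomogeneous.sum _ _ _ fun m hm => isHomogeneous_monomial _ ?_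
  rw [Finsupp.degree_eq_sum, Fin.sum_univ_two, ← hf.sum_exps_fin_four (mem_filter.mp hm).1]
  simp [segreExpX, add_assoc]

/-- Exponents of the monomials not divisible by `x₀x₃`: modulo the quadric every monomial is
congruent to one of these, and the Segre pullback does not identify any two of them. -/
def standardExps : Set (Fin 4 →₀ ℕ) := {m | m 0 = 0 ∨ m 3 = 0}

lemma exists_mem_restrictSupport_standardExps_sub_mem (f : MvPolynomial (Fin 4) R) :
    ∃ r ∈ restrictSupport R standardExps, f - r ∈ Ideal.span {X 0 * X 3 - X 1 * X 2} := by
  induction f using MvPolynomial.induction_on' with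
  | monomial m c =>
    set k := min (m 0) (m 3)
    set base := m - Finsupp.single 0 k - Finsupp.single 3 k
    set red := base + Finsupp.single 1 k + Finsupp.single 2 k with hred
    have hm : m = base + Finsupp.single 0 k + Finsupp.single 3 k := by
      ext i; fin_cases i <;> simp [base, k]
    have hred0 : red 0 = m 0 - k := by simp [red, base]
    have hred3 : red 3 = m 3 - k := by simp [red, base]
    refine ⟨monomial red c, ?_, ?_⟩
    · rw [mem_restrictSupport_iff]
      intro n hn
      rw [mem_singleton.mp (support_monomial_subset (Finset.mem_coe.mp hn)), standardExps,
        Set.mem_ofPred_eq, hred0, hred3]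
      omega
    · rw [Ideal.mem_span_singleton, hm, monomial_add_single, monomial_add_single, hred,
        monomial_add_single, monomial_add_single, mul_assoc, mul_assoc, ← mul_sub, ← mul_pow,
        ← mul_pow]
      exact (sub_dvd_pow_sub_pow _ _ k).mul_left _
  | add p r hp hr =>
    obtain ⟨p', hp', hpp'⟩ := hp
    obtain ⟨r', hr', hrr'⟩ := hr
    refine ⟨p' + r', add_mem hp' hr', ?_⟩
    rw [add_sub_add_comm]
    exact add_mem hpp' hrr'

lemma segreExp_injOn : Set.InjOn (fun m => (segreExpX m, segreExpY m)) standardExps := by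
  intro m hm m' hm' h
  simp only [Prod.mk.injEq, segreExpX, segreExpY] at h
  obtain ⟨hx, hy⟩ := h
  have hx0 := congrArg (· 0) hx
  have hx1 := congrArg (· 1) hx
  have hy0 := congrArg (· 0) hy
  have hy1 := congrArg (· 1) hy
  simp only [Finsupp.coe_add, Pi.add_apply, Finsupp.single_eq_same, Finsupp.single_eq_of_ne, ne_eq,
    zero_ne_one, one_ne_zero, not_false_eq_true, add_zero, zero_add] at hx0 hx1 hy0 hy1
  simp only [standardExps, Set.mem_ofPred_eq] at hm hm'
  -- the exponents determine `2 (m 0 - m 3) = (m 0 + m 1) + (m 0 + m 2) - (m 1 + m 3) - (m 2 + m 3)`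
  ext i; fin_cases i <;> simp <;> omega

lemma eq_zero_of_segrePullback_eq_zero {r : MvPolynomial (Fin 4) R}
    (hr : r ∈ restrictSupport R standardExps) (h : segrePullback r = 0) : r = 0 := by
  ext m
  by_contra hm
  have hcoeff : ((segrePullback r).coeff (segreExpY m)).coeff (segreExpX m) = r.coeff m := by
    rw [coeff_segrePullback, coeff_sum, Finset.sum_eq_single m]
    · simp
    · intro m' hm' hne
      rw [coeff_monomial, if_neg]
      intro hx
      exact hne (segreExp_injOn (hr (mem_filter.mp hm').1) (hr (mem_support_iff.mpr hm))
        (Prod.ext hx (mem_filter.mp hm').2))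
    · intro hm'
      exact (hm' (mem_filter.mpr ⟨mem_support_iff.mpr hm, rfl⟩)).elim
  rw [h] at hcoeff
  exact hm (by simpa using hcoeff.symm)

theorem ker_segrePullback :
    RingHom.ker (segrePullback (R := R)) = Ideal.span {X 0 * X 3 - X 1 * X 2} := by
  have hspan : Ideal.span {X 0 * X 3 - X 1 * X 2} ≤ RingHom.ker (segrePullback (R := R)) := by
    rw [Ideal.span_le, Set.singleton_subset_iff]
    exact segrePullback_quadric
  refine le_antisymm (fun f hf => ?_) hspan
  obtain ⟨r, hr, hfr⟩ := exists_mem_restrictSupport_standardExps_sub_mem f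
  have hr0 : r = 0 := by
    refine eq_zero_of_segrePullback_eq_zero hr ?_
    have := hspan hfr
    rw [RingHom.mem_ker, map_sub, RingHom.mem_ker.mp hf, zero_sub, neg_eq_zero] at this
    exact this
  simpa [hr0] using hfr

end Segre

section Points

variable {K : Type*} [CommRing K]

lemma exists_segrePoint_eq {v : Fin 4 → K} (hv : ∃ i, v i = 1 ∧ ∀ j < i, v j = 0)
    (hq : v 0 * v 3 = v 1 * v 2) :
    ∃ x y : Option K, segrePoint (projLinePoint x) (projLinePoint y) = v := by
  obtain ⟨i, hi, hlt⟩ := hv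
  fin_cases i
  · have h0 : v 0 = 1 := hi
    have h3 : v 3 = v 1 * v 2 := by rwa [h0, one_mul] at hq
    refine ⟨some (v 2), some (v 1), ?_⟩
    ext j; fin_cases j <;> simp [segrePoint, projLinePoint, h0, h3, mul_comm]
  · have h0 : v 0 = 0 := hlt 0 (by decide)
    have h1 : v 1 = 1 := hi
    have h2 : v 2 = 0 := by rw [h0, h1, zero_mul, one_mul] at hq; exact hq.symm
    refine ⟨some (v 3), none, ?_⟩
    ext j; fin_cases j <;> simp [segrePoint, projLinePoint, h0, h1, h2]
  · have h0 : v 0 = 0 := hlt 0 (by decide)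
    have h1 : v 1 = 0 := hlt 1 (by decide)
    have h2 : v 2 = 1 := hi
    refine ⟨none, some (v 3), ?_⟩
    ext j; fin_cases j <;> simp [segrePoint, projLinePoint, h0, h1, h2]
  · have h0 : v 0 = 0 := hlt 0 (by decide)
    have h1 : v 1 = 0 := hlt 1 (by decide)
    have h2 : v 2 = 0 := hlt 2 (by decide)
    have h3 : v 3 = 1 := hi
    refine ⟨none, none, ?_⟩
    ext j; fin_cases j <;> simp [segrePoint, projLinePoint, h0, h1, h2, h3]

lemma card_zeros_le_of_bihomogeneous [IsDomain K] [Fintype K] [DecidableEq K]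
    {G : MvPolynomial (Fin 2) (MvPolynomial (Fin 2) K)} (hG : G ≠ 0) {s : ℕ}
    (hy : G.IsHomogeneous s) (hx : ∀ b, (G.coeff b).IsHomogeneous s)
    (hs : s ≤ Fintype.card K + 1) :
    #{xy : Option K × Option K |
        eval (projLinePoint xy.2) (map (eval (projLinePoint xy.1)) G) = 0} ≤
      2 * s * (Fintype.card K + 1) - s ^ 2 := by
  obtain ⟨b, hb⟩ := ne_zero_iff.mp hG
  rw [card_filter, Fintype.sum_prod_type, ← Fintype.card_option]
  simp only [← card_filter]
  refine sum_le_two_mul_mul_sub_sq _ {x | map (eval (projLinePoint x)) G = 0}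
    (by rwa [Fintype.card_option]) (fun x => (card_filter_le _ _).trans_eq card_univ)
    (fun x hx => card_zeros_le_of_isHomogeneous (hy.map _) (by simpa using hx)) ?_
  -- a row vanishing identically is a zero of the nonzero form `G.coeff b`
  calc #{x : Option K | map (eval (projLinePoint x)) G = 0}
      ≤ #{x : Option K | eval (projLinePoint x) (G.coeff b) = 0} :=
        card_le_card fun x hx => by
          simp only [mem_filter, mem_univ, true_and] at hx ⊢
          rw [← coeff_map, hx, coeff_zero]
    _ ≤ s := card_zeros_le_of_isHomogeneous (hx b) hb

end Points

open MvPolynomial in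
/-- A curve cut out on the hyperbolic quadric `H : x₀x₃ = x₁x₂` in `P³` over `F_q`
by a surface of degree `s < q` not containing `H` has at most `2s(q+1) - s²`
rational points. -/
theorem stmt_6 (F : Type) [Field F] [Fintype F] (q s : ℕ)
    (hq : Fintype.card F = q) (hs : s < q)
    (f : MvPolynomial (Fin 4) F) (hf : f.IsHomogeneous s)
    (hnc : f ∉ Ideal.span {(X 0 * X 3 - X 1 * X 2 : MvPolynomial (Fin 4) F)}) :
    {p : Fin 4 → F | (∃ i, p i = 1 ∧ ∀ j < i, p j = 0) ∧
        p 0 * p 3 = p 1 * p 2 ∧ MvPolynomial.eval p f = 0}.ncard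
      ≤ 2 * s * (q + 1) - s ^ 2 := by
  classical
  have hG : segrePullback f ≠ 0 := fun h =>
    hnc (ker_segrePullback (R := F) ▸ RingHom.mem_ker.mpr h)
  set Z : Finset (Option F × Option F) := {xy |
    eval (projLinePoint xy.2) (map (eval (projLinePoint xy.1)) (segrePullback f)) = 0}
  calc _ ≤ ((fun xy : Option F × Option F => segrePoint (projLinePoint xy.1)
        (projLinePoint xy.2)) '' Z).ncard := by
        refine Set.ncard_le_ncard ?_ (Set.toFinite _)
        rintro v ⟨hv, hquad, hfv⟩
        obtain ⟨x, y, rfl⟩ := exists_segrePoint_eq hv hquad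
        refine ⟨(x, y), ?_, rfl⟩
        rw [Finset.mem_coe, mem_filter]
        exact ⟨mem_univ _, (eval_map_eval_segrePullback f _ _).trans hfv⟩
    _ ≤ #Z := (Set.ncard_image_le (Set.toFinite _)).trans (Set.ncard_coe_finset Z).le
    _ ≤ 2 * s * (q + 1) - s ^ 2 := hq ▸ card_zeros_le_of_bihomogeneous hG
      (isHomogeneous_segrePullback hf) (isHomogeneous_coeff_segrePullback hf) (by omega)
end

section
/- A nonzero bihomogeneous form of bidegree (s,s) on P¹ × P¹ over F_q with s < q has exactly 2s(q+1) − s² rational zeros if and only if it factors (up to scalar) as g(u₀,v₀)·h(u₁,v₁) where g and h each split into s distinct linear factors over F_q; equivalently, its zero locus is a union of s lines of each ruling. -/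
/-!
Restricted to a line of either ruling, a form of bidegree `(s, s)` is a binary form of degree `s`,
so it either vanishes on the whole line or has at most `s` zeros there. More than `s` full lines
of one ruling force the form to vanish identically; otherwise counting zeros line by line gives
at most `α (q + 1) + (q + 1 - α) s` zeros when `α ≤ s` lines are full, and `2s(q + 1) - s²` zeros
force `α = s` for both rulings. A binary form of degree `s` vanishing at `s` given points is a
multiple of the product of the corresponding linear forms; applied to a column and then to a row
through a point where the form does not vanish, this gives the factorization. Conversely, such a
product vanishes exactly on `s + s` lines, which meet in `s²` points.
-/

open Finset Polynomial

lemma card_filter_prod_le {α β : Type*} [Fintype α] [Fintype β] [DecidableEq α]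
    (R : α → β → Prop) [DecidableRel R] (A : Finset α) {s : ℕ} (hR : ∀ a ∉ A, #{b | R a b} ≤ s) :
    #{p : α × β | R p.1 p.2} ≤ #A * Fintype.card β + #Aᶜ * s := by
  calc #{p : α × β | R p.1 p.2} = ∑ a, #{b | R a b} := by
        simp only [card_filter, Fintype.sum_prod_type]
    _ = ∑ a ∈ A, #{b | R a b} + ∑ a ∈ Aᶜ, #{b | R a b} := (sum_add_sum_compl A _).symm
    _ ≤ #A * Fintype.card β + #Aᶜ * s := by
      gcongr
      · exact sum_le_card_nsmul _ _ _ fun a _ => card_le_univ _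
      · exact sum_le_card_nsmul _ _ _ fun a ha => hR a (mem_compl.mp ha)

lemma exists_fin_embedding_map_univ {α : Type*} {n : ℕ} (A : Finset α) (hA : #A = n) :
    ∃ e : Fin n ↪ α, univ.map e = A := by
  subst hA
  refine ⟨A.equivFin.symm.toEmbedding.trans (.subtype _), ?_⟩
  ext a
  simpa using ⟨by rintro ⟨i, rfl⟩; exact (A.equivFin.symm i).2,
    fun ha => ⟨A.equivFin ⟨a, ha⟩, by simp⟩⟩

lemma eq_of_two_mul_mul_sub_sq_le {α s n : ℕ} (hα : α ≤ s) (hs : s < n)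
    (h : 2 * s * n - s ^ 2 ≤ α * n + (n - α) * s) : α = s := by
  obtain ⟨t, rfl⟩ := Nat.exists_eq_add_of_le (hα.trans hs.le)
  rw [Nat.sub_le_iff_le_add, Nat.add_sub_cancel_left] at h
  by_contra hne
  have hlt := lt_of_le_of_ne hα hne
  zify at h hlt hs
  nlinarith [mul_pos (sub_pos.mpr hlt) (sub_pos.mpr hs)]

lemma Polynomial.eval_homogenize_one_zero {R : Type*} [CommSemiring R] (p : R[X]) (n : ℕ) :
    MvPolynomial.eval ![1, 0] (p.homogenize n) = p.coeff n := by
  rw [homogenize, map_sum, sum_eq_single (n, 0)]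
  · simp [MvPolynomial.eval_monomial]
  · rintro ⟨k, l⟩ hkl hne
    have hl : l ≠ 0 := by
      rintro rfl
      simp_all
    simp [MvPolynomial.eval_monomial, hl]
  · simp

namespace ProjLine

variable {F : Type} [Field F]

def pt (a : Option F) : F × F := a.elim (0, 1) fun t => (1, t)

def linForm (a : Option F) (v : F × F) : F := (pt a).2 * v.1 - (pt a).1 * v.2

def binaryForm (s : ℕ) (c : Fin (s + 1) → F) (v : F × F) : F :=
  ∑ i : Fin (s + 1), c i * (v.1 ^ (i : ℕ) * v.2 ^ (s - (i : ℕ)))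

/-- The dehomogenization lives in the chart `v.1 = 1`, where `pt (some t) = (1, t)`;
hence the swapped coordinates. -/
def IsBinaryForm (s : ℕ) (f : F × F → F) : Prop :=
  ∃ p : F[X], p.natDegree ≤ s ∧ ∀ v : F × F, f v = MvPolynomial.eval ![v.2, v.1] (p.homogenize s)

lemma linForm_pt_eq_zero_iff (a b : Option F) : linForm a (pt b) = 0 ↔ a = b := by
  cases a <;> cases b <;> simp [linForm, pt, sub_eq_zero, eq_comm]

lemma isBinaryForm_linForm (a : Option F) : IsBinaryForm 1 (linForm a) := by
  cases a with
  | none => exact ⟨1, by simp, fun v => by simp [linForm, pt]⟩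
  | some t =>
    refine ⟨C t - X, (natDegree_sub_le _ _).trans (by simp), fun v => ?_⟩
    simp [linForm, pt]

lemma isBinaryForm_binaryForm (s : ℕ) (c : Fin (s + 1) → F) :
    IsBinaryForm s (binaryForm s c) := by
  refine ⟨∑ i : Fin (s + 1), C (c i) * X ^ (s - (i : ℕ)), ?_, fun v => ?_⟩
  · refine natDegree_sum_le_of_forall_le _ _ fun i _ => (natDegree_C_mul_le _ _).trans ?_
    simp
  · simp only [binaryForm, homogenize_finsetSum, homogenize_C_mul, map_sum, map_mul,
      MvPolynomial.eval_C]
    refine sum_congr rfl fun i _ => ?_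
    rw [homogenize_X_pow (Nat.sub_le _ _), Nat.sub_sub_self (Nat.lt_succ_iff.mp i.2)]
    simp [mul_comm]

lemma IsBinaryForm.mul {m n : ℕ} {f g : F × F → F} (hf : IsBinaryForm m f)
    (hg : IsBinaryForm n g) : IsBinaryForm (m + n) (fun v => f v * g v) := by
  obtain ⟨p, hp, hfp⟩ := hf
  obtain ⟨r, hr, hgr⟩ := hg
  refine ⟨p * r, natDegree_mul_le.trans (add_le_add hp hr), fun v => ?_⟩
  simp [hfp, hgr, homogenize_mul _ _ hp hr]

lemma IsBinaryForm.const_mul {s : ℕ} {f : F × F → F} (hf : IsBinaryForm s f) (k : F) :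
    IsBinaryForm s (fun v => k * f v) := by
  obtain ⟨p, hp, hfp⟩ := hf
  exact ⟨C k * p, (natDegree_C_mul_le _ _).trans hp, fun v => by simp [hfp]⟩

lemma IsBinaryForm.sub {s : ℕ} {f g : F × F → F} (hf : IsBinaryForm s f)
    (hg : IsBinaryForm s g) : IsBinaryForm s (fun v => f v - g v) := by
  obtain ⟨p, hp, hfp⟩ := hf
  obtain ⟨r, hr, hgr⟩ := hg
  exact ⟨p - r, (natDegree_sub_le _ _).trans (max_le hp hr), fun v => by simp [hfp, hgr]⟩

lemma isBinaryForm_prod_linForm (Z : Finset (Option F)) :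
    IsBinaryForm #Z (fun v => ∏ a ∈ Z, linForm a v) := by
  induction Z using Finset.cons_induction with
  | empty => exact ⟨1, by simp, fun v => by simp⟩
  | cons a Z ha ih =>
    simpa [prod_cons, add_comm] using (isBinaryForm_linForm a).mul ih

lemma IsBinaryForm.eq_zero_of_lt_card {s : ℕ} {f : F × F → F} (hf : IsBinaryForm s f)
    {Z : Finset (Option F)} (hZ : s < #Z) (hfZ : ∀ a ∈ Z, f (pt a) = 0) : f = 0 := by
  obtain ⟨p, hp, hfp⟩ := hf
  suffices p = 0 by funext v; simp [hfp, this]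
  refine eq_zero_of_degree_lt_of_eval_finset_eq_zero Z.eraseNone ?_ fun t ht => ?_
  -- a zero at infinity lowers the degree of the dehomogenization by one
  · by_cases hnone : none ∈ Z
    · have hcoeff : p.coeff s = 0 := by
        simpa [hfp, pt, eval_homogenize_one_zero] using hfZ none hnone
      have hlt : p.degree < s := by
        rw [degree_lt_iff_coeff_zero]
        intro m hm
        rcases hm.eq_or_lt with rfl | hm
        · exact hcoeff
        · exact coeff_eq_zero_of_natDegree_lt (hp.trans_lt hm)
      rw [card_eraseNone_of_mem hnone]
      exact hlt.trans_le (by exact_mod_cast Nat.le_sub_one_of_lt hZ)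
    · rw [card_eraseNone_of_not_mem hnone]
      exact (degree_le_of_natDegree_le hp).trans_lt (by exact_mod_cast hZ)
  · have := hfZ _ (mem_eraseNone.mp ht)
    rw [hfp, pt, Option.elim_some, eval_homogenize hp _ (by simp)] at this
    simpa using this

lemma prod_linForm_pt_ne_zero {Z : Finset (Option F)} {b : Option F} (hb : b ∉ Z) :
    ∏ a ∈ Z, linForm a (pt b) ≠ 0 :=
  prod_ne_zero_iff.mpr fun a ha h => hb ((linForm_pt_eq_zero_iff a b).mp h ▸ ha)

lemma IsBinaryForm.eq_mul_prod_linForm {s : ℕ} {f : F × F → F} (hf : IsBinaryForm s f)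
    {Z : Finset (Option F)} (hZ : #Z = s) (hfZ : ∀ a ∈ Z, f (pt a) = 0) {b : Option F}
    (hb : b ∉ Z) (v : F × F) :
    f v = f (pt b) / (∏ a ∈ Z, linForm a (pt b)) * ∏ a ∈ Z, linForm a v := by
  classical
  have hG := prod_linForm_pt_ne_zero hb
  have hdiff := hf.sub (hZ ▸ isBinaryForm_prod_linForm Z |>.const_mul
    (f (pt b) / ∏ a ∈ Z, linForm a (pt b)))
  refine sub_eq_zero.mp (congrFun (hdiff.eq_zero_of_lt_card (Z := insert b Z)
    (by rw [card_insert_of_notMem hb, hZ]; omega) fun a ha => ?_) v)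
  rcases mem_insert.mp ha with rfl | ha
  · field_simp
    simp
  · simp [hfZ a ha, prod_eq_zero (f := fun a' => linForm a' (pt a)) ha
      ((linForm_pt_eq_zero_iff a a).mpr rfl)]

def bihomForm (s : ℕ) (c : Fin (s + 1) × Fin (s + 1) → F) (v w : F × F) : F :=
  ∑ i : Fin (s + 1), ∑ j : Fin (s + 1), c (i, j) *
    (v.1 ^ (i : ℕ) * v.2 ^ (s - (i : ℕ)) * w.1 ^ (j : ℕ) * w.2 ^ (s - (j : ℕ)))

lemma bihomForm_eq_binaryForm_right (s : ℕ) (c : Fin (s + 1) × Fin (s + 1) → F) (v w : F × F) :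
    bihomForm s c v w = binaryForm s (fun j => binaryForm s (fun i => c (i, j)) v) w := by
  simp only [bihomForm, binaryForm, sum_mul]
  rw [sum_comm]
  exact sum_congr rfl fun j _ => sum_congr rfl fun i _ => by ring

lemma bihomForm_eq_binaryForm_left (s : ℕ) (c : Fin (s + 1) × Fin (s + 1) → F) (v w : F × F) :
    bihomForm s c v w = binaryForm s (fun i => binaryForm s (fun j => c (i, j)) w) v := by
  simp only [bihomForm, binaryForm, sum_mul]
  exact sum_congr rfl fun i _ => sum_congr rfl fun j _ => by ring

lemma isBinaryForm_bihomForm_right (s : ℕ) (c : Fin (s + 1) × Fin (s + 1) → F) (v : F × F) :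
    IsBinaryForm s (bihomForm s c v) := by
  rw [funext (bihomForm_eq_binaryForm_right s c v)]
  exact isBinaryForm_binaryForm s _

lemma isBinaryForm_bihomForm_left (s : ℕ) (c : Fin (s + 1) × Fin (s + 1) → F) (w : F × F) :
    IsBinaryForm s fun v => bihomForm s c v w := by
  rw [funext fun v => bihomForm_eq_binaryForm_left s c v w]
  exact isBinaryForm_binaryForm s _

lemma eq_mul_prod_mul_prod {s : ℕ} {E : F × F → F × F → F} (hrow : ∀ v, IsBinaryForm s (E v))
    (hcol : ∀ w, IsBinaryForm s fun v => E v w) {A B : Finset (Option F)} (hA : #A = s)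
    (hB : #B = s) (hEA : ∀ a ∈ A, E (pt a) = 0) (hEB : ∀ b ∈ B, (fun v => E v (pt b)) = 0)
    {a₀ b₀ : Option F} (h₀ : E (pt a₀) (pt b₀) ≠ 0) :
    ∃ k ≠ 0, ∀ v w, E v w = k * (∏ a ∈ A, linForm a v) * ∏ b ∈ B, linForm b w := by
  have ha₀ : a₀ ∉ A := fun h => h₀ (congrFun (hEA a₀ h) _)
  have hb₀ : b₀ ∉ B := fun h => h₀ (congrFun (hEB b₀ h) _)
  refine ⟨E (pt a₀) (pt b₀) / ((∏ a ∈ A, linForm a (pt a₀)) * ∏ b ∈ B, linForm b (pt b₀)),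
    div_ne_zero h₀ (mul_ne_zero (prod_linForm_pt_ne_zero ha₀) (prod_linForm_pt_ne_zero hb₀)),
    fun v w => ?_⟩
  rw [(hcol w).eq_mul_prod_linForm hA (fun a ha => congrFun (hEA a ha) w) ha₀ v,
    (hrow (pt a₀)).eq_mul_prod_linForm hB (fun b hb => congrFun (hEB b hb) (pt a₀)) hb₀ w]
  ring

section Finite

variable [Fintype F] [DecidableEq F]

lemma IsBinaryForm.card_zeros_le {s : ℕ} {f : F × F → F} (hf : IsBinaryForm s f) (hf0 : f ≠ 0) :
    #{a | f (pt a) = 0} ≤ s :=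
  not_lt.mp fun h => hf0 (hf.eq_zero_of_lt_card h fun _ ha => (mem_filter.mp ha).2)

lemma card_zeros_swap (E : F × F → F × F → F) :
    #{p : Option F × Option F | E (pt p.2) (pt p.1) = 0} =
      #{p : Option F × Option F | E (pt p.1) (pt p.2) = 0} :=
  card_equiv (Equiv.prodComm _ _) fun p => by simp

variable {q s : ℕ} {E : F × F → F × F → F}

lemma card_zero_rows_eq (hq : Fintype.card F = q) (hs : s < q) (hrow : ∀ v, IsBinaryForm s (E v))
    (hcol : ∀ w, IsBinaryForm s fun v => E v w) {a₀ b₀ : Option F}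
    (h₀ : E (pt a₀) (pt b₀) ≠ 0)
    (hN : #{p : Option F × Option F | E (pt p.1) (pt p.2) = 0} = 2 * s * (q + 1) - s ^ 2) :
    #{a | E (pt a) = 0} = s := by
  set A : Finset (Option F) := {a | E (pt a) = 0}
  have hA : #A ≤ s := by
    by_contra! h
    exact h₀ (congrFun ((hcol (pt b₀)).eq_zero_of_lt_card h
      fun a ha => congrFun (mem_filter.mp ha).2 _) (pt a₀))
  have hcount := card_filter_prod_le (fun a b => E (pt a) (pt b) = 0) A
    fun a ha => (hrow (pt a)).card_zeros_le (by simpa [A] using ha)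
  rw [card_compl, Fintype.card_option, hq, hN] at hcount
  exact eq_of_two_mul_mul_sub_sq_le hA (by omega) hcount

theorem exists_eq_mul_prod_mul_prod_of_card_zeros (hq : Fintype.card F = q) (hs : s < q)
    (hrow : ∀ v, IsBinaryForm s (E v)) (hcol : ∀ w, IsBinaryForm s fun v => E v w)
    (hN : #{p : Option F × Option F | E (pt p.1) (pt p.2) = 0} = 2 * s * (q + 1) - s ^ 2) :
    ∃ A B : Finset (Option F), #A = s ∧ #B = s ∧
      ∃ k ≠ 0, ∀ v w, E v w = k * (∏ a ∈ A, linForm a v) * ∏ b ∈ B, linForm b w := by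
  obtain ⟨⟨a₀, b₀⟩, -, h₀⟩ := exists_mem_notMem_of_card_lt_card
    (s := {p : Option F × Option F | E (pt p.1) (pt p.2) = 0}) (t := univ) (by
      rw [hN, card_univ, Fintype.card_prod, Fintype.card_option, hq]
      exact Nat.sub_lt_left_of_lt_add (by nlinarith) (by nlinarith))
  simp only [mem_filter, mem_univ, true_and] at h₀
  have hA := card_zero_rows_eq hq hs hrow hcol h₀ hN
  have hB := card_zero_rows_eq (E := fun v w => E w v) hq hs hcol hrow h₀
    (by rw [card_zeros_swap, hN])
  exact ⟨_, _, hA, hB, eq_mul_prod_mul_prod hrow hcol hA hB (fun _ ha => (mem_filter.mp ha).2)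
    (fun _ hb => (mem_filter.mp hb).2) h₀⟩

theorem card_zeros_of_eq_mul_prod_mul_prod (hq : Fintype.card F = q) {A B : Finset (Option F)}
    (hA : #A = s) (hB : #B = s) {k : F} (hk : k ≠ 0)
    (hE : ∀ v w, E v w = k * (∏ a ∈ A, linForm a v) * ∏ b ∈ B, linForm b w) :
    #{p : Option F × Option F | E (pt p.1) (pt p.2) = 0} = 2 * s * (q + 1) - s ^ 2 := by
  have hzeros : ({p : Option F × Option F | E (pt p.1) (pt p.2) = 0} : Finset _) =
      A ×ˢ univ ∪ univ ×ˢ B := by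
    ext ⟨a, b⟩
    simp [hE, hk, prod_eq_zero_iff, linForm_pt_eq_zero_iff]
  have hcard := card_union_add_card_inter (A ×ˢ univ) (univ ×ˢ B)
  rw [product_inter_product, inter_univ, univ_inter, card_product, card_product, card_product,
    card_univ, Fintype.card_option, hq, hA, hB] at hcard
  rw [hzeros]
  exact Nat.eq_sub_of_add_eq (by linarith)

end Finite

theorem ncard_zeros_eq_iff [Fintype F] {q s : ℕ} {E : F × F → F × F → F}
    (hq : Fintype.card F = q) (hs : s < q) (hrow : ∀ v, IsBinaryForm s (E v))
    (hcol : ∀ w, IsBinaryForm s fun v => E v w) :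
    {p : Option F × Option F | E (pt p.1) (pt p.2) = 0}.ncard = 2 * s * (q + 1) - s ^ 2 ↔
      ∃ (A B : Fin s ↪ Option F) (k : F), k ≠ 0 ∧ ∀ v w : F × F,
        E v w = k * (∏ m : Fin s, linForm (A m) v) * ∏ m : Fin s, linForm (B m) w := by
  classical
  rw [← coe_filter_univ, Set.ncard_coe_finset]
  constructor
  · intro hN
    obtain ⟨A, B, hA, hB, k, hk, hE⟩ :=
      exists_eq_mul_prod_mul_prod_of_card_zeros hq hs hrow hcol hN
    obtain ⟨eA, rfl⟩ := exists_fin_embedding_map_univ A hA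
    obtain ⟨eB, rfl⟩ := exists_fin_embedding_map_univ B hB
    exact ⟨eA, eB, k, hk, by simpa only [prod_map] using hE⟩
  · rintro ⟨eA, eB, k, hk, hE⟩
    exact card_zeros_of_eq_mul_prod_mul_prod hq (A := univ.map eA) (B := univ.map eB)
      (by simp) (by simp) hk (by simpa only [prod_map] using hE)

end ProjLine

theorem stmt_7_general (F : Type) [Field F] [Fintype F] (q s : ℕ)
    (hq : Fintype.card F = q) (hs : s < q)
    (c : Fin (s + 1) × Fin (s + 1) → F) :
    let pt : Option F → F × F := fun o => o.elim (0, 1) fun t => (1, t)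
    let E : (F × F) → (F × F) → F := fun v w =>
      ∑ i : Fin (s + 1), ∑ j : Fin (s + 1), c (i, j) *
        (v.1 ^ (i : ℕ) * v.2 ^ (s - (i : ℕ)) * w.1 ^ (j : ℕ) * w.2 ^ (s - (j : ℕ)))
    ({p : Option F × Option F | E (pt p.1) (pt p.2) = 0}.ncard
        = 2 * s * (q + 1) - s ^ 2 ↔
      ∃ (A B : Fin s ↪ Option F) (k : F), k ≠ 0 ∧
        ∀ v w : F × F, E v w =
          k * (∏ m : Fin s, ((pt (A m)).2 * v.1 - (pt (A m)).1 * v.2)) *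
              (∏ m : Fin s, ((pt (B m)).2 * w.1 - (pt (B m)).1 * w.2))) := by
  intro pt E
  exact ProjLine.ncard_zeros_eq_iff hq hs (ProjLine.isBinaryForm_bihomForm_right s c)
    (ProjLine.isBinaryForm_bihomForm_left s c)

/-- A nonzero bihomogeneous form of bidegree `(s,s)` on `P¹ × P¹` over `F_q`
(with `0 < s < q`) has exactly `2s(q+1) - s²` rational zeros if and only if it
factors, up to a nonzero scalar, as `g(u₀,v₀)·h(u₁,v₁)` where `g` and `h` each
split into `s` distinct linear factors over `F_q` (i.e. its zero locus is a
union of `s` lines of each ruling). -/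
theorem stmt_7 (F : Type) [Field F] [Fintype F] (q s : ℕ)
    (hq : Fintype.card F = q) (hs0 : 0 < s) (hs : s < q)
    (c : Fin (s + 1) × Fin (s + 1) → F) (hc : c ≠ 0) :
    let pt : Option F → F × F := fun o => o.elim (0, 1) fun t => (1, t)
    let E : (F × F) → (F × F) → F := fun v w =>
      ∑ i : Fin (s + 1), ∑ j : Fin (s + 1), c (i, j) *
        (v.1 ^ (i : ℕ) * v.2 ^ (s - (i : ℕ)) * w.1 ^ (j : ℕ) * w.2 ^ (s - (j : ℕ)))
    ({p : Option F × Option F | E (pt p.1) (pt p.2) = 0}.ncard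
        = 2 * s * (q + 1) - s ^ 2 ↔
      ∃ (A B : Fin s ↪ Option F) (k : F), k ≠ 0 ∧
        ∀ v w : F × F, E v w =
          k * (∏ m : Fin s, ((pt (A m)).2 * v.1 - (pt (A m)).1 * v.2)) *
              (∏ m : Fin s, ((pt (B m)).2 * w.1 - (pt (B m)).1 * w.2))) :=
  stmt_7_general F q s hq hs c
end

section
/- For 0 ≤ s ≤ q−2, the extended code B₀^{ext}(s) has length q²+1, dimension (s+1)², and minimum distance q²+1−s(q+1). -/
/-!
A codeword is determined by its coefficient array `a : Fin (s+1) × Fin (s+1) → F_{q²}`: at the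
affine point `(1 : t)` it is `P_a(t) = ∑ a_ij t^((s-i) + q(s-j))`, a polynomial of degree at most
`s(q+1) < q²` whose exponents are distinct base-`q` numbers, and at `(0 : 1)` it is `a_00`, the
coefficient of the top monomial. So the coefficient map is injective, and a nonzero codeword has at
most `s(q+1)` zeros: the affine zeros are roots of `P_a`, and if `(0 : 1)` is a zero as well then
`a_00 = 0` and `P_a` has smaller degree.

Since `t^(q²) = t`, raising a codeword to the `q`-th power gives the codeword of `(a_ji^q)`, so the
subfield subcode corresponds to the arrays with `a_ji = a_ij^q`. By Galois descent these form an
`F_q`-form of `F_{q²}^((s+1)²)`, of dimension `(s+1)²`. The bound is attained by `g(t^(q+1))` for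
`g` with `s` distinct nonzero roots in `F_q`, as `t ↦ t^(q+1)` is `(q+1)`-to-one onto `F_q^×`.
-/

open Polynomial Finset

namespace ExtendedBCH

section Hamming

variable {ι β : Type*} [Fintype ι] [Zero β] [DecidableEq β]

lemma hammingNorm_eq_card_sub_card_zeros (c : ι → β) :
    hammingNorm c = Fintype.card ι - #{i | c i = 0} := by
  have := card_filter_add_card_filter_not (s := univ) (fun i => c i = 0)
  rw [card_univ] at this
  simp only [hammingNorm, ne_eq]
  omega

lemma hammingNorm_option (c : Option ι → β) :
    hammingNorm c = hammingNorm (fun i => c (some i)) + if c none = 0 then 0 else 1 := by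
  simp only [hammingNorm, card_filter, Fintype.sum_option]
  split_ifs <;> simp_all [add_comm]

end Hamming

lemma card_sub_natDegree_le_hammingNorm_eval {K : Type*} [Field K] [Fintype K] [DecidableEq K]
    {P : K[X]} (hP : P ≠ 0) : Fintype.card K - P.natDegree ≤ hammingNorm fun t => P.eval t := by
  have hzeros : #{t | P.eval t = 0} ≤ P.natDegree :=
    card_le_degree_of_subset_roots fun t ht => by simpa [mem_roots hP] using ht
  rw [hammingNorm_eq_card_sub_card_zeros]
  omega

section Code

variable {K : Type*} [Field K] (q s : ℕ)

/-- Normalized coordinates on `P¹(K) = Option K`: `none` is `(0 : 1)` and `some t` is `(1 : t)`. -/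
def normalizedCoords : Option K → K × K := fun o => o.elim (0, 1) fun t => (1, t)

/-- The exponent of `y` in the monomial `x^(i+qj) y^((s-i)+q(s-j))`. -/
def monoDeg (ij : Fin (s + 1) × Fin (s + 1)) : ℕ := (s - ij.1) + q * (s - ij.2)

def monomialVec (ij : Fin (s + 1) × Fin (s + 1)) : Option K → K := fun p =>
  (normalizedCoords p).1 ^ ((ij.1 : ℕ) + q * ij.2) * (normalizedCoords p).2 ^ monoDeg q s ij

noncomputable def codePoly (a : Fin (s + 1) × Fin (s + 1) → K) : K[X] :=
  ∑ ij, monomial (monoDeg q s ij) (a ij)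

noncomputable def evalCode : (Fin (s + 1) × Fin (s + 1) → K) →ₗ[K] (Option K → K) :=
  Fintype.linearCombination K (monomialVec q s)

variable {q s}

lemma monoDeg_injective (hsq : s < q) : Function.Injective (monoDeg q s) := by
  rintro ⟨i, j⟩ ⟨i', j'⟩ h
  have hq : 0 < q := by omega
  have hlt : ∀ k : Fin (s + 1), s - k < q := fun k => by omega
  simp only [monoDeg] at h
  have hmod := congrArg (· % q) h
  have hdiv := congrArg (· / q) h
  simp only [Nat.add_mul_mod_self_left, Nat.add_mul_div_left _ _ hq,
    Nat.mod_eq_of_lt (hlt _), Nat.div_eq_of_lt (hlt _)] at hmod hdiv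
  rw [Prod.mk.injEq, ← Fin.val_inj, ← Fin.val_inj]
  omega

lemma monoDeg_le (ij : Fin (s + 1) × Fin (s + 1)) : monoDeg q s ij ≤ s + q * s :=
  Nat.add_le_add (Nat.sub_le _ _) (Nat.mul_le_mul_left q (Nat.sub_le _ _))

lemma monoDeg_zero : monoDeg q s (0, 0) = s + q * s := by simp [monoDeg]

lemma pow_monoDeg_swap {t : K} (ht : t ^ (q * q) = t) (ij : Fin (s + 1) × Fin (s + 1)) :
    (t ^ monoDeg q s ij) ^ q = t ^ monoDeg q s ij.swap := by
  rw [← pow_mul, monoDeg, monoDeg, show (s - ij.1 + q * (s - ij.2)) * q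
    = q * q * (s - ij.2) + q * (s - ij.1) by ring, pow_add, pow_mul, ht, ← pow_add]
  rfl

lemma eval_codePoly (a : Fin (s + 1) × Fin (s + 1) → K) (t : K) :
    (codePoly q s a).eval t = ∑ ij, a ij * t ^ monoDeg q s ij := by
  simp [codePoly, eval_finsetSum]

lemma coeff_codePoly (hsq : s < q) (a : Fin (s + 1) × Fin (s + 1) → K)
    (ij : Fin (s + 1) × Fin (s + 1)) : (codePoly q s a).coeff (monoDeg q s ij) = a ij := by
  rw [codePoly, finsetSum_coeff, sum_eq_single ij (fun kl _ hkl => ?_) (by simp)]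
  · simp
  · exact coeff_monomial_of_ne _ fun h => hkl (monoDeg_injective hsq h).symm

lemma natDegree_codePoly_le (a : Fin (s + 1) × Fin (s + 1) → K) :
    (codePoly q s a).natDegree ≤ s + q * s :=
  natDegree_sum_le_of_forall_le _ _ fun ij _ => (natDegree_monomial_le _).trans (monoDeg_le ij)

lemma codePoly_injective (hsq : s < q) : Function.Injective (codePoly q s (K := K)) :=
  fun a b h => funext fun ij => by rw [← coeff_codePoly hsq a, h, coeff_codePoly hsq]

lemma evalCode_some (a : Fin (s + 1) × Fin (s + 1) → K) (t : K) :
    evalCode q s a (some t) = (codePoly q s a).eval t := by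
  simp [evalCode, Fintype.linearCombination_apply, monomialVec, normalizedCoords, eval_codePoly]

lemma evalCode_none (hq : 0 < q) (a : Fin (s + 1) × Fin (s + 1) → K) :
    evalCode q s a none = a (0, 0) := by
  rw [evalCode, Fintype.linearCombination_apply, Finset.sum_apply, sum_eq_single (0, 0)]
  · simp [monomialVec, normalizedCoords]
  · rintro ⟨i, j⟩ - hij
    have : (i : ℕ) + q * j ≠ 0 := fun h => hij (by ext <;> simp_all [Nat.pos_iff_ne_zero])
    simp only [Pi.smul_apply, monomialVec, normalizedCoords, Option.elim_none, zero_pow this,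
      zero_mul, smul_zero]
  · simp

lemma evalCode_injective [Fintype K] (hsq : s < q) (hK : s + q * s < Fintype.card K) :
    Function.Injective (evalCode q s (K := K)) := by
  refine (injective_iff_map_eq_zero _).mpr fun a ha => codePoly_injective hsq ?_
  rw [show codePoly q s (0 : Fin (s + 1) × Fin (s + 1) → K) = 0 by simp [codePoly]]
  refine eq_zero_of_natDegree_lt_card_of_eval_eq_zero _ Function.injective_id (fun t => ?_)
    ((natDegree_codePoly_le a).trans_lt hK)
  simpa [evalCode_some] using congrFun ha (some t)

lemma le_hammingNorm_evalCode [Fintype K] [DecidableEq K] (hsq : s < q)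
    {a : Fin (s + 1) × Fin (s + 1) → K} (ha : a ≠ 0) :
    Fintype.card K + 1 - (s + q * s) ≤ hammingNorm (evalCode q s a) := by
  have hP : codePoly q s a ≠ 0 := fun h =>
    ha (codePoly_injective hsq (h.trans (by simp [codePoly])))
  have hdeg := natDegree_codePoly_le (q := q) a
  have hfin := card_sub_natDegree_le_hammingNorm_eval hP
  rw [hammingNorm_option]
  simp only [evalCode_some, evalCode_none (by omega : 0 < q)]
  split_ifs with h0
  · have : (codePoly q s a).natDegree ≠ s + q * s := fun h => hP <| by
      rw [← leadingCoeff_eq_zero, leadingCoeff, h, ← monoDeg_zero, coeff_codePoly hsq, h0]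
    omega
  · omega

lemma span_monomials_eq_range_evalCode :
    Submodule.span K {v | ∃ i j : ℕ, i ≤ s ∧ j ≤ s ∧ v = fun p =>
        (normalizedCoords p).1 ^ (i + q * j) * (normalizedCoords p).2 ^ ((s - i) + q * (s - j))}
      = LinearMap.range (evalCode q s (K := K)) := by
  rw [evalCode, Fintype.range_linearCombination]
  congr 1
  ext v
  constructor
  · rintro ⟨i, j, hi, hj, rfl⟩
    exact ⟨(⟨i, by omega⟩, ⟨j, by omega⟩), rfl⟩
  · rintro ⟨ij, rfl⟩
    exact ⟨ij.1, ij.2, Nat.lt_succ_iff.mp ij.1.2, Nat.lt_succ_iff.mp ij.2.2, rfl⟩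

end Code

section Descent

variable {F K ι : Type*} [Field F] [Field K] [Algebra F K]

def twistedFixed (σ : K →ₐ[F] K) (π : ι → ι) : Submodule F (ι → K) where
  carrier := {a | ∀ i, σ (a (π i)) = a i}
  add_mem' ha hb i := by simp [ha i, hb i]
  zero_mem' _ := map_zero σ
  smul_mem' c a ha i := by simp [ha i]

lemma mem_twistedFixed {σ : K →ₐ[F] K} {π : ι → ι} {a : ι → K} :
    a ∈ twistedFixed σ π ↔ ∀ i, σ (a (π i)) = a i := Iff.rfl

/-- Galois descent for a quadratic extension: `a ↦ (v, w)` with `a = v + θ w` identifies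
`ι → K` with two copies of the twisted-fixed arrays. -/
lemma two_mul_finrank_twistedFixed [Fintype ι] [FiniteDimensional F K] {σ : K →ₐ[F] K}
    (hσ : ∀ x, σ (σ x) = x) {θ : K} (hθ : σ θ ≠ θ) {π : ι → ι} (hπ : π.Involutive) :
    2 * Module.finrank F (twistedFixed σ π) = Fintype.card ι * Module.finrank F K := by
  set V := twistedFixed σ π
  have hθ' : θ - σ θ ≠ 0 := sub_ne_zero.mpr hθ.symm
  let Φ : (V × V) →ₗ[F] (ι → K) := V.subtype.coprod (θ • V.subtype)
  have hinj : Function.Injective Φ := by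
    refine (injective_iff_map_eq_zero Φ).mpr fun ⟨⟨v, hv⟩, ⟨w, hw⟩⟩ h => ?_
    have h1 : ∀ i, v i + θ * w i = 0 := fun i => congrFun h i
    have h2 : ∀ i, v i + σ θ * w i = 0 := fun i => by
      simpa [hv i, hw i] using congrArg σ (h1 (π i))
    have hw0 : w = 0 := funext fun i => by
      have : (θ - σ θ) * w i = 0 := by linear_combination h1 i - h2 i
      exact (mul_eq_zero.mp this).resolve_left hθ'
    have hv0 : v = 0 := funext fun i => by simpa [hw0] using h1 i
    simp [hv0, hw0]
  have hsurj : Function.Surjective Φ := by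
    intro f
    let w : ι → K := fun i => (f i - σ (f (π i))) / (θ - σ θ)
    have hw : w ∈ V := fun i => by
      simp only [w, map_div₀, map_sub, hσ, hπ i]
      rw [← neg_sub, ← neg_sub θ, neg_div_neg_eq]
    have hv : f - θ • w ∈ V := fun i => by
      simp only [Pi.sub_apply, Pi.smul_apply, smul_eq_mul, map_sub, map_mul]
      rw [hw i]
      simp only [w]
      field_simp
      ring
    exact ⟨(⟨_, hv⟩, ⟨w, hw⟩), by simp [Φ]⟩
  have := (LinearEquiv.ofBijective Φ ⟨hinj, hsurj⟩).finrank_eq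
  rw [Module.finrank_prod, Module.finrank_pi_fintype, sum_const, card_univ, smul_eq_mul] at this
  omega

end Descent

section FiniteField

variable {F K : Type*} [Field F] [Fintype F] [Field K] [Fintype K] [Algebra F K]

lemma mem_range_algebraMap_iff_pow_card_eq (x : K) :
    x ∈ Set.range (algebraMap F K) ↔ x ^ Fintype.card F = x := by
  have : FiniteDimensional F K := Module.Finite.of_finite
  rw [IsGalois.mem_range_algebraMap_iff_fixed]
  refine ⟨fun h => h (FiniteField.frobeniusAlgEquivOfAlgebraic F K), fun hx f => ?_⟩
  obtain ⟨n, rfl⟩ := (FiniteField.bijective_frobeniusAlgEquivOfAlgebraic_pow F K).2 f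
  rw [AlgEquiv.coe_pow]
  exact Function.iterate_fixed hx n

lemma frobeniusAlgHom_frobeniusAlgHom (hK : Fintype.card K = Fintype.card F ^ 2) (x : K) :
    FiniteField.frobeniusAlgHom F K (FiniteField.frobeniusAlgHom F K x) = x := by
  simp [← pow_mul, ← sq, ← hK, FiniteField.pow_card]

lemma finrank_eq_two (hK : Fintype.card K = Fintype.card F ^ 2) : Module.finrank F K = 2 := by
  have : FiniteDimensional F K := Module.Finite.of_finite
  exact Nat.pow_right_injective Fintype.one_lt_card
    ((Module.card_eq_pow_finrank (K := F) (V := K)).symm.trans hK)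

lemma exists_frobeniusAlgHom_ne (hK : Fintype.card K = Fintype.card F ^ 2) :
    ∃ θ : K, FiniteField.frobeniusAlgHom F K θ ≠ θ := by
  have : ¬ Function.Surjective (algebraMap F K) := fun h => by
    have hle := Fintype.card_le_of_surjective _ h
    have := Fintype.one_lt_card (α := F)
    rw [hK] at hle
    nlinarith
  obtain ⟨θ, hθ⟩ := not_forall.mp this
  exact ⟨θ, fun h => hθ ((mem_range_algebraMap_iff_pow_card_eq θ).mpr h)⟩

lemma finrank_twistedFixed_frobeniusAlgHom (hK : Fintype.card K = Fintype.card F ^ 2)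
    {ι : Type*} [Fintype ι] {π : ι → ι} (hπ : π.Involutive) :
    Module.finrank F (twistedFixed (FiniteField.frobeniusAlgHom F K) π) = Fintype.card ι := by
  have : FiniteDimensional F K := Module.Finite.of_finite
  obtain ⟨θ, hθ⟩ := exists_frobeniusAlgHom_ne hK
  have := two_mul_finrank_twistedFixed (frobeniusAlgHom_frobeniusAlgHom hK) hθ hπ
  rw [finrank_eq_two hK] at this
  omega

lemma pow_card_add_one_mem_range (hK : Fintype.card K = Fintype.card F ^ 2) (t : K) :
    t ^ (Fintype.card F + 1) ∈ Set.range (algebraMap F K) := by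
  rw [mem_range_algebraMap_iff_pow_card_eq, ← pow_mul, add_mul, one_mul, pow_add, ← sq, ← hK,
    FiniteField.pow_card, ← pow_succ']

/-- Each nonzero `b : F` has exactly `q + 1` preimages under `t ↦ t ^ (q + 1)`: no fiber has more
than `q + 1` points, the fiber of `0` is `{0}`, and the `q - 1` other fibers cover the remaining
`q² - 1 = (q - 1)(q + 1)` points. -/
lemma card_filter_pow_card_add_one_eq [DecidableEq K]
    (hK : Fintype.card K = Fintype.card F ^ 2) {b : F} (hb : b ≠ 0) :
    #{t : K | t ^ (Fintype.card F + 1) = algebraMap F K b} = Fintype.card F + 1 := by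
  classical
  set q := Fintype.card F with hq
  let N : F → ℕ := fun c => #{t : K | t ^ (q + 1) = algebraMap F K c}
  have hsum : ∑ c, N c = q ^ 2 := by
    rw [← hK, ← card_univ, card_eq_sum_card_fiberwise (f := fun t : K => t ^ (q + 1))
      (t := univ.map ⟨_, (algebraMap F K).injective⟩) fun t _ => by
        simpa using pow_card_add_one_mem_range hK t, sum_map]
    rfl
  have hle : ∀ c, N c ≤ q + 1 := fun c => by
    have hP := X_pow_sub_C_ne_zero (n := q + 1) (by omega) (algebraMap F K c)
    refine (card_le_degree_of_subset_roots (p := X ^ (q + 1) - C (algebraMap F K c))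
      fun t ht => ?_).trans natDegree_X_pow_sub_C.le
    simpa [mem_roots hP, sub_eq_zero] using ht
  have h0 : N 0 = 1 := by
    simp [N, pow_eq_zero_iff, Finset.filter_eq']
  have hrest :
      ∑ c ∈ (univ : Finset F).erase 0, N c = ∑ c ∈ (univ : Finset F).erase 0, (q + 1) := by
    have hq1 : 1 ≤ q := Fintype.card_pos
    rw [sum_const, card_erase_of_mem (mem_univ _), card_univ, ← hq, smul_eq_mul]
    have := add_sum_erase univ N (mem_univ 0)
    rw [hsum, h0] at this
    zify [hq1] at this ⊢
    linear_combination this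
  exact (sum_eq_sum_iff_of_le fun c _ => hle c).mp hrest b (mem_erase.mpr ⟨hb, mem_univ _⟩)

end FiniteField

section Subcode

variable {F K : Type*} [Field F] [Fintype F] [Field K] [Fintype K] [Algebra F K] {s : ℕ}

lemma evalCode_frobeniusAlgHom (hK : Fintype.card K = Fintype.card F ^ 2)
    (a : Fin (s + 1) × Fin (s + 1) → K) :
    evalCode (Fintype.card F) s (fun ij => FiniteField.frobeniusAlgHom F K (a ij.swap))
      = fun o => FiniteField.frobeniusAlgHom F K (evalCode (Fintype.card F) s a o) := by
  funext o
  cases o with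
  | none => simp [evalCode_none Fintype.card_pos]
  | some t =>
    have ht : t ^ (Fintype.card F * Fintype.card F) = t := by
      rw [← sq, ← hK, FiniteField.pow_card]
    rw [evalCode_some, evalCode_some, eval_codePoly, eval_codePoly, map_sum]
    refine Fintype.sum_equiv (Equiv.prodComm _ _) _ _ fun ij => ?_
    simp [mul_pow, pow_monoDeg_swap ht]

lemma evalCode_mem_pi_range_iff (hK : Fintype.card K = Fintype.card F ^ 2)
    (hs : s + 2 ≤ Fintype.card F) (a : Fin (s + 1) × Fin (s + 1) → K) :
    (∀ o, evalCode (Fintype.card F) s a o ∈ Set.range (algebraMap F K))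
      ↔ a ∈ twistedFixed (FiniteField.frobeniusAlgHom F K) Prod.swap := by
  have hdeg : s + Fintype.card F * s < Fintype.card K := by rw [hK]; nlinarith
  simp only [mem_range_algebraMap_iff_pow_card_eq, mem_twistedFixed, ← funext_iff]
  rw [← (evalCode_injective (by omega) hdeg).eq_iff, evalCode_frobeniusAlgHom hK]
  rfl

lemma inf_pi_range_eq_map_twistedFixed (hK : Fintype.card K = Fintype.card F ^ 2)
    (hs : s + 2 ≤ Fintype.card F) :
    (LinearMap.range (evalCode (Fintype.card F) s)).restrictScalars F
        ⊓ Submodule.pi Set.univ (fun _ => LinearMap.range (Algebra.linearMap F K))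
      = (twistedFixed (FiniteField.frobeniusAlgHom F K) Prod.swap).map
          ((evalCode (Fintype.card F) s).restrictScalars F) := by
  ext c
  simp only [Submodule.mem_inf, Submodule.restrictScalars_mem, LinearMap.mem_range,
    Submodule.mem_pi, Set.mem_univ, true_implies, Submodule.mem_map,
    LinearMap.coe_restrictScalars, Algebra.linearMap_apply]
  constructor
  · rintro ⟨⟨a, rfl⟩, hc⟩
    exact ⟨a, (evalCode_mem_pi_range_iff hK hs a).mp hc, rfl⟩
  · rintro ⟨a, ha, rfl⟩
    exact ⟨⟨a, rfl⟩, (evalCode_mem_pi_range_iff hK hs a).mpr ha⟩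

end Subcode

section Diagonal

variable {F K : Type*} [Field F] [Field K] [Algebra F K] {q s : ℕ}

noncomputable def diagArray (s : ℕ) (g : F[X]) : Fin (s + 1) × Fin (s + 1) → K :=
  fun ij => if ij.1 = ij.2 then algebraMap F K (g.coeff (s - ij.1)) else 0

lemma diagArray_mem_twistedFixed (σ : K →ₐ[F] K) (g : F[X]) :
    diagArray s g ∈ twistedFixed σ Prod.swap := fun ij => by
  by_cases h : ij.1 = ij.2 <;> simp [diagArray, h, eq_comm]

lemma evalCode_diagArray_none (hq : 0 < q) (g : F[X]) :
    evalCode q s (diagArray s g : _ → K) none = algebraMap F K (g.coeff s) := by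
  simp [evalCode_none hq, diagArray]

lemma evalCode_diagArray_some {g : F[X]} (hg : g.natDegree ≤ s) (t : K) :
    evalCode q s (diagArray s g) (some t) = (g.map (algebraMap F K)).eval (t ^ (q + 1)) := by
  have hdiag : ∀ i : Fin (s + 1), t ^ monoDeg q s (i, i) = (t ^ (q + 1)) ^ (s - i) := fun i => by
    rw [← pow_mul, monoDeg]
    ring_nf
  rw [evalCode_some, eval_codePoly, Fintype.sum_prod_type]
  simp only [diagArray, ite_mul, zero_mul, sum_ite_eq, mem_univ, if_true, hdiag]
  rw [eval_eq_sum_range' (n := s + 1) ((natDegree_map_le).trans_lt (Nat.lt_succ_of_le hg)),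
    ← sum_range_reflect, Fin.sum_univ_eq_sum_range (fun i => algebraMap F K (g.coeff (s - i))
      * (t ^ (q + 1)) ^ (s - i))]
  simp [coeff_map]

end Diagonal

section MinimumWeight

variable {F K : Type*} [Field F] [Fintype F] [Field K] [Fintype K] [DecidableEq K] [Algebra F K]

lemma card_filter_prod_pow_card_add_one_sub_eq_zero (hK : Fintype.card K = Fintype.card F ^ 2)
    {B : Finset F} (hB : (0 : F) ∉ B) :
    #{t : K | ∏ b ∈ B, (t ^ (Fintype.card F + 1) - algebraMap F K b) = 0}
      = #B * (Fintype.card F + 1) := by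
  have hfibers :
      ({t : K | ∏ b ∈ B, (t ^ (Fintype.card F + 1) - algebraMap F K b) = 0} : Finset K)
        = B.biUnion fun b => {t : K | t ^ (Fintype.card F + 1) = algebraMap F K b} := by
    ext t
    simp [prod_eq_zero_iff, sub_eq_zero]
  rw [hfibers, card_biUnion, sum_congr rfl fun b hb =>
    card_filter_pow_card_add_one_eq hK (ne_of_mem_of_not_mem hb hB), sum_const, smul_eq_mul]
  intro b _ b' _ hbb'
  simp only [Function.onFun, disjoint_left, mem_filter, mem_univ, true_and]
  exact fun t h h' => hbb' ((algebraMap F K).injective (h.symm.trans h'))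

lemma exists_mem_twistedFixed_hammingNorm_evalCode_eq (hK : Fintype.card K = Fintype.card F ^ 2)
    {s : ℕ} (hs : s < Fintype.card F) :
    ∃ a ∈ twistedFixed (FiniteField.frobeniusAlgHom F K) Prod.swap,
      evalCode (Fintype.card F) s a ≠ 0 ∧
      hammingNorm (evalCode (Fintype.card F) s a)
        = Fintype.card F ^ 2 + 1 - s * (Fintype.card F + 1) := by
  classical
  obtain ⟨B, hB, hBcard⟩ := exists_subset_card_eq (s := (univ : Finset F).erase 0) (n := s)
    (by rw [card_erase_of_mem (mem_univ _), card_univ]; omega)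
  set g : F[X] := ∏ b ∈ B, (X - C b)
  have hg : g.natDegree = s := by simp [g, hBcard]
  have hmonic : g.Monic := monic_prod_X_sub_C id B
  have hnone : evalCode (Fintype.card F) s (diagArray s g : _ → K) none = 1 := by
    rw [evalCode_diagArray_none Fintype.card_pos, ← hg, hmonic.coeff_natDegree, map_one]
  have hsome : (fun t => evalCode (Fintype.card F) s (diagArray s g : _ → K) (some t))
      = fun t => ∏ b ∈ B, (t ^ (Fintype.card F + 1) - algebraMap F K b) := by
    funext t
    simp [evalCode_diagArray_some hg.le, g, eval_prod, Polynomial.map_prod]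
  refine ⟨diagArray s g, diagArray_mem_twistedFixed _ g,
    fun h => by simpa [hnone] using congrFun h none, ?_⟩
  rw [hammingNorm_option, hnone, if_neg one_ne_zero, hsome, hammingNorm_eq_card_sub_card_zeros,
    card_filter_prod_pow_card_add_one_sub_eq_zero hK fun h0 => by simpa using hB h0, hBcard, hK]
  have : s * (Fintype.card F + 1) ≤ Fintype.card F ^ 2 := by nlinarith
  omega

end MinimumWeight

end ExtendedBCH

open ExtendedBCH in
/-- For `0 ≤ s ≤ q-2`, the extended BCH code `B₀^{ext}(s)` — the subfield subcode
over `F_q` of the `F_{q²}`-span of the evaluations at `P¹(F_{q²})` of the monomials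
`x^{i+qj} y^{(s-i)+q(s-j)}`, `0 ≤ i,j ≤ s` — has length `q²+1`, dimension `(s+1)²`
and minimum distance `q²+1-s(q+1)`. -/
theorem stmt_10 (F K : Type) [Field F] [Field K] [Algebra F K]
    [Fintype F] [Fintype K] [DecidableEq K] (q s : ℕ)
    (hqF : Fintype.card F = q) (hqK : Fintype.card K = q ^ 2) (hs : s ≤ q - 2) :
    let pt : Option K → K × K := fun o => o.elim (0, 1) fun t => (1, t)
    let Bext : Submodule K (Option K → K) := Submodule.span K
      {v | ∃ i j : ℕ, i ≤ s ∧ j ≤ s ∧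
        v = fun p => (pt p).1 ^ (i + q * j) * (pt p).2 ^ ((s - i) + q * (s - j))}
    let B₀ : Submodule F (Option K → K) := Bext.restrictScalars F ⊓
      Submodule.pi Set.univ fun _ => LinearMap.range (Algebra.linearMap F K)
    Fintype.card (Option K) = q ^ 2 + 1 ∧
    Module.finrank F B₀ = (s + 1) ^ 2 ∧
    (∃ c ∈ B₀, c ≠ 0 ∧ hammingNorm c = q ^ 2 + 1 - s * (q + 1)) ∧
    (∀ c ∈ B₀, c ≠ 0 → q ^ 2 + 1 - s * (q + 1) ≤ hammingNorm c) := by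
  intro pt Bext B₀
  subst hqF
  have hsq : s + 2 ≤ Fintype.card F := by have := Fintype.one_lt_card (α := F); omega
  have hB₀ : B₀ = (twistedFixed (FiniteField.frobeniusAlgHom F K) Prod.swap).map
      ((evalCode (Fintype.card F) s).restrictScalars F) := by
    rw [← inf_pi_range_eq_map_twistedFixed hqK hsq, ← span_monomials_eq_range_evalCode]
    rfl
  have hinj : Function.Injective ((evalCode (Fintype.card F) s (K := K)).restrictScalars F) :=
    evalCode_injective (by omega) (by rw [hqK]; nlinarith)
  refine ⟨by simp [hqK], ?_, ?_, ?_⟩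
  · rw [hB₀, ← (Submodule.equivMapOfInjective _ hinj _).finrank_eq,
      finrank_twistedFixed_frobeniusAlgHom hqK Prod.swap_swap]
    simp [sq]
  · obtain ⟨a, ha, hne, hw⟩ :=
      exists_mem_twistedFixed_hammingNorm_evalCode_eq hqK (s := s) (by omega)
    exact ⟨_, hB₀ ▸ Submodule.mem_map_of_mem ha, hne, hw⟩
  · rintro c hc hc0
    rw [hB₀] at hc
    obtain ⟨a, -, rfl⟩ := hc
    have ha : a ≠ 0 := by rintro rfl; simp at hc0
    calc _ = Fintype.card K + 1 - (s + Fintype.card F * s) := by rw [hqK]; ring_nf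
      _ ≤ _ := le_hammingNorm_evalCode (by omega) ha
end

section
/- The linear automorphism of P³ over F_q given by the matrix with rows (1,0,0,0), (0,0,−N(w),0), (0,1,Tr(w),0), (0,0,0,N(w)), where w is a primitive element of F_{q²}, maps the elliptic quadric E: x₀x₃ = Q(x₁,x₂) to itself, fixes the two rational points (1:0:0:0) and (0:0:0:1), and permutes the remaining q²−1 rational points of E in a single cycle. -/
/-!
Identify the affine point `(1 : x : y : Q(x,y))` of `E` with `z = x + w y ∈ F_{q²}`. Then
`Q(x,y) = z z^q` is the norm of `z`, so `Q` is anisotropic and `(0:0:0:1)` is the only point of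
`E` at infinity, while the matrix acts on the affine points as `z ↦ w z`. Since `w` generates
`F_{q²}^×`, some power of the matrix moves any point with `z ≠ 0` to any other.
-/

open Matrix

namespace EllipticQuadric

variable {F : Type*} [Field F]

def quadForm (t n x y : F) : F := x ^ 2 + t * x * y + n * y ^ 2

/-- A projective point is represented by its coordinate vector whose first nonzero entry is `1`. -/
def points (t n : F) : Set (Fin 4 → F) :=
  {p | (∃ i, p i = 1 ∧ ∀ j < i, p j = 0) ∧ p 0 * p 3 = quadForm t n (p 1) (p 2)}

def affinePoint (t n : F) (p : F × F) : Fin 4 → F := ![1, p.1, p.2, quadForm t n p.1 p.2]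

def cycleMatrix (t n : F) : Matrix (Fin 4) (Fin 4) F :=
  !![1, 0, 0, 0; 0, 0, -n, 0; 0, 1, t, 0; 0, 0, 0, n]

def step (t n : F) (p : F × F) : F × F := (-(n * p.2), p.1 + t * p.2)

variable {t n : F}

theorem ne_zero_of_anisotropic (hQ : ∀ x y, quadForm t n x y = 0 → x = 0 ∧ y = 0) : n ≠ 0 := by
  intro h
  simpa using (hQ 0 1 (by simp [quadForm, h])).2

theorem affinePoint_zero : affinePoint t n 0 = ![1, 0, 0, 0] := by
  ext i; fin_cases i <;> simp [affinePoint, quadForm]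

theorem affinePoint_mem_points (p : F × F) : affinePoint t n p ∈ points t n :=
  ⟨⟨0, by simp [affinePoint], fun j hj => absurd hj (Fin.not_lt_zero j)⟩, by simp [affinePoint]⟩

theorem e3_mem_points : ![0, 0, 0, 1] ∈ points t n := by
  refine ⟨⟨3, rfl, fun j hj => ?_⟩, by simp [quadForm]⟩
  fin_cases j <;> simp_all

theorem eq_e3_or_exists_affinePoint_of_mem
    (hQ : ∀ x y, quadForm t n x y = 0 → x = 0 ∧ y = 0) {p : Fin 4 → F} (hp : p ∈ points t n) :
    p = ![0, 0, 0, 1] ∨ ∃ r : F × F, p = affinePoint t n r := by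
  obtain ⟨⟨i, hi, hlt⟩, hE⟩ := hp
  fin_cases i
  · right
    refine ⟨(p 1, p 2), ?_⟩
    have h0 : p 0 = 1 := hi
    have h3 : p 3 = quadForm t n (p 1) (p 2) := by simpa [h0] using hE
    ext j; fin_cases j <;> simp [affinePoint, h0, h3]
  all_goals
    have h0 : p 0 = 0 := hlt 0 (by decide)
    rw [h0, zero_mul] at hE
  · exact absurd hi (by simp [(hQ _ _ hE.symm).1])
  · exact absurd hi (by simp [(hQ _ _ hE.symm).2])
  · left
    ext j; fin_cases j
    · exact h0
    · exact hlt 1 (by decide)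
    · exact hlt 2 (by decide)
    · exact hi

theorem exists_affinePoint_of_mem (hQ : ∀ x y, quadForm t n x y = 0 → x = 0 ∧ y = 0)
    {p : Fin 4 → F} (hp : p ∈ points t n) (hp0 : p ≠ ![1, 0, 0, 0]) (hp3 : p ≠ ![0, 0, 0, 1]) :
    ∃ r : F × F, r ≠ 0 ∧ p = affinePoint t n r := by
  obtain h | ⟨r, rfl⟩ := eq_e3_or_exists_affinePoint_of_mem hQ hp
  · exact absurd h hp3
  · exact ⟨r, by rintro rfl; exact hp0 affinePoint_zero, rfl⟩

theorem cycleMatrix_mulVec (v : Fin 4 → F) :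
    cycleMatrix t n *ᵥ v = ![v 0, -n * v 2, v 1 + t * v 2, n * v 3] := by
  ext i; fin_cases i <;> simp [cycleMatrix, mulVec, dotProduct, Fin.sum_univ_four]

theorem cycleMatrix_mulVec_e0 : cycleMatrix t n *ᵥ ![1, 0, 0, 0] = (1 : F) • ![1, 0, 0, 0] := by
  rw [cycleMatrix_mulVec, one_smul]; simp

theorem cycleMatrix_mulVec_e3 : cycleMatrix t n *ᵥ ![0, 0, 0, 1] = n • ![0, 0, 0, 1] := by
  rw [cycleMatrix_mulVec]; ext i; fin_cases i <;> simp

theorem quadForm_step (p : F × F) :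
    quadForm t n (step t n p).1 (step t n p).2 = n * quadForm t n p.1 p.2 := by
  simp only [quadForm, step]; ring

theorem cycleMatrix_mulVec_affinePoint (p : F × F) :
    cycleMatrix t n *ᵥ affinePoint t n p = affinePoint t n (step t n p) := by
  rw [cycleMatrix_mulVec]
  ext i; fin_cases i <;> simp [affinePoint, ← quadForm_step, step]

theorem cycleMatrix_pow_mulVec_affinePoint (k : ℕ) (p : F × F) :
    (cycleMatrix t n ^ k) *ᵥ affinePoint t n p = affinePoint t n ((step t n)^[k] p) := by
  induction k with
  | zero => simp
  | succ k ih =>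
    rw [pow_succ', ← mulVec_mulVec, ih, cycleMatrix_mulVec_affinePoint,
      Function.iterate_succ_apply']

theorem cycleMatrix_mulVec_mem (hQ : ∀ x y, quadForm t n x y = 0 → x = 0 ∧ y = 0)
    {p : Fin 4 → F} (hp : p ∈ points t n) :
    ∃ p' ∈ points t n, ∃ c : F, c ≠ 0 ∧ cycleMatrix t n *ᵥ p = c • p' := by
  obtain rfl | ⟨r, rfl⟩ := eq_e3_or_exists_affinePoint_of_mem hQ hp
  · exact ⟨_, e3_mem_points, n, ne_zero_of_anisotropic hQ, cycleMatrix_mulVec_e3⟩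
  · exact ⟨_, affinePoint_mem_points (step t n r), 1, one_ne_zero,
      by rw [one_smul, cycleMatrix_mulVec_affinePoint]⟩

variable {K : Type*} [Field K] [Algebra F K]

def ofCoords (w : K) (p : F × F) : K := algebraMap F K p.1 + w * algebraMap F K p.2

theorem eq_zero_of_ofCoords_eq_zero {w : K} (hw : w ∉ Set.range (algebraMap F K)) {p : F × F}
    (h : ofCoords w p = 0) : p = 0 := by
  obtain ⟨x, y⟩ := p
  simp only [ofCoords] at h
  obtain rfl : y = 0 := by
    by_contra hy
    refine hw ⟨-x / y, ?_⟩
    rw [map_div₀, map_neg, div_eq_iff (by simpa using hy)]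
    linear_combination -h
  simp_all

theorem ofCoords_injective {w : K} (hw : w ∉ Set.range (algebraMap F K)) :
    Function.Injective (ofCoords (F := F) w) := fun p p' h =>
  sub_eq_zero.mp <| eq_zero_of_ofCoords_eq_zero hw <| by
    simp only [ofCoords, Prod.fst_sub, Prod.snd_sub, map_sub] at h ⊢
    linear_combination h

variable {w w' : K}

theorem algebraMap_quadForm (ht : algebraMap F K t = w + w') (hn : algebraMap F K n = w * w')
    (x y : F) : algebraMap F K (quadForm t n x y) = ofCoords w (x, y) * ofCoords w' (x, y) := by
  simp only [quadForm, ofCoords, map_add, map_mul, map_pow, ht, hn]; ring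

theorem quadForm_anisotropic (hw : w ∉ Set.range (algebraMap F K))
    (hw' : w' ∉ Set.range (algebraMap F K)) (ht : algebraMap F K t = w + w')
    (hn : algebraMap F K n = w * w') (x y : F) (h : quadForm t n x y = 0) : x = 0 ∧ y = 0 := by
  have hprod := algebraMap_quadForm ht hn x y
  rw [h, map_zero, eq_comm, mul_eq_zero] at hprod
  rw [← Prod.mk_eq_zero]
  exact hprod.elim (eq_zero_of_ofCoords_eq_zero hw) (eq_zero_of_ofCoords_eq_zero hw')

theorem ofCoords_step (ht : algebraMap F K t = w + w') (hn : algebraMap F K n = w * w')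
    (p : F × F) : ofCoords w (step t n p) = w * ofCoords w p := by
  simp only [ofCoords, step, map_add, map_mul, map_neg, ht, hn]; ring

theorem ofCoords_iterate_step (ht : algebraMap F K t = w + w') (hn : algebraMap F K n = w * w')
    (k : ℕ) (p : F × F) : ofCoords w ((step t n)^[k] p) = w ^ k * ofCoords w p := by
  induction k with
  | zero => simp
  | succ k ih => rw [Function.iterate_succ_apply', ofCoords_step ht hn, ih, pow_succ', mul_assoc]

theorem exists_cycleMatrix_pow_mulVec_eq (hw : w ∉ Set.range (algebraMap F K))
    (hgen : ∀ z : K, z ≠ 0 → ∃ k : ℕ, z = w ^ k)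
    (ht : algebraMap F K t = w + w') (hn : algebraMap F K n = w * w')
    {p p' : F × F} (hp : p ≠ 0) (hp' : p' ≠ 0) :
    ∃ k : ℕ, (cycleMatrix t n ^ k) *ᵥ affinePoint t n p = affinePoint t n p' := by
  have hz : ofCoords w p ≠ 0 := mt (eq_zero_of_ofCoords_eq_zero hw) hp
  have hz' : ofCoords w p' ≠ 0 := mt (eq_zero_of_ofCoords_eq_zero hw) hp'
  obtain ⟨k, hk⟩ := hgen _ (div_ne_zero hz' hz)
  refine ⟨k, ?_⟩
  rw [cycleMatrix_pow_mulVec_affinePoint]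
  refine congrArg _ (ofCoords_injective hw ?_)
  rw [ofCoords_iterate_step ht hn, ← hk, div_mul_cancel₀ _ hz]

theorem notMem_range_algebraMap_of_forall_eq_pow [Fintype F] [Fintype K]
    (hcard : Fintype.card F < Fintype.card K) (hgen : ∀ z : K, z ≠ 0 → ∃ k : ℕ, z = w ^ k) :
    w ∉ Set.range (algebraMap F K) := by
  rintro ⟨y, rfl⟩
  have hsurj : Function.Surjective (algebraMap F K) := by
    intro z
    by_cases hz : z = 0
    · exact ⟨0, by simp [hz]⟩
    · obtain ⟨k, rfl⟩ := hgen z hz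
      exact ⟨y ^ k, map_pow _ _ _⟩
  exact hcard.not_ge (Fintype.card_le_of_surjective _ hsurj)

theorem pow_notMem_range_algebraMap [Fintype K] {q : ℕ} (hK : Fintype.card K = q ^ 2)
    (hw : w ∉ Set.range (algebraMap F K)) : w ^ q ∉ Set.range (algebraMap F K) := by
  rintro ⟨y, hy⟩
  refine hw ⟨y ^ q, ?_⟩
  rw [map_pow, hy, ← pow_mul, ← sq, ← hK, FiniteField.pow_card]

end EllipticQuadric

open EllipticQuadric

/-- The linear automorphism of `P³` over `F_q` with matrix rows `(1,0,0,0)`,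
`(0,0,-N(w),0)`, `(0,1,Tr(w),0)`, `(0,0,0,N(w))`, where `w` is a primitive element
of `F_{q²}`, maps the elliptic quadric `E : x₀x₃ = Q(x₁,x₂)` to itself, fixes the
rational points `(1:0:0:0)` and `(0:0:0:1)`, and permutes the remaining `q²-1`
rational points of `E` in a single cycle. -/
theorem stmt_11 (F K : Type) [Field F] [Field K] [Algebra F K]
    [Fintype F] [Fintype K] (q : ℕ)
    (hqF : Fintype.card F = q) (hqK : Fintype.card K = q ^ 2)
    (w : K) (hw : ∀ z : K, z ≠ 0 → ∃ k : ℕ, z = w ^ k)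
    (t n : F) (ht : algebraMap F K t = w + w ^ q)
    (hn : algebraMap F K n = w ^ (q + 1)) :
    let M : Matrix (Fin 4) (Fin 4) F :=
      !![1, 0, 0, 0; 0, 0, -n, 0; 0, 1, t, 0; 0, 0, 0, n]
    let Qf : F → F → F := fun x y => x ^ 2 + t * x * y + n * y ^ 2
    -- rational points of E, with normalized coordinates
    let Epts : Set (Fin 4 → F) := {p | (∃ i, p i = 1 ∧ ∀ j < i, p j = 0) ∧
      p 0 * p 3 = Qf (p 1) (p 2)}
    let e0 : Fin 4 → F := ![1, 0, 0, 0]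
    let e3 : Fin 4 → F := ![0, 0, 0, 1]
    -- E is mapped to itself
    (∀ p ∈ Epts, ∃ p' ∈ Epts, ∃ c : F, c ≠ 0 ∧ M.mulVec p = c • p') ∧
    -- the two points (1:0:0:0) and (0:0:0:1) are fixed
    (∃ c : F, c ≠ 0 ∧ M.mulVec e0 = c • e0) ∧
    (∃ c : F, c ≠ 0 ∧ M.mulVec e3 = c • e3) ∧
    -- the remaining q²-1 rational points are shifted in a single cycle
    (∀ p ∈ Epts, p ≠ e0 → p ≠ e3 → ∀ p' ∈ Epts, p' ≠ e0 → p' ≠ e3 →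
      ∃ k : ℕ, ∃ c : F, c ≠ 0 ∧ (M ^ k).mulVec p = c • p') := by
  intro M Qf Epts e0 e3
  have hcard : Fintype.card F < Fintype.card K := by
    have := Fintype.one_lt_card (α := F)
    rw [hqK, ← hqF]
    nlinarith
  have hwF := notMem_range_algebraMap_of_forall_eq_pow hcard hw
  have hn' : algebraMap F K n = w * w ^ q := by rw [hn, pow_succ']
  have hQ := quadForm_anisotropic hwF (pow_notMem_range_algebraMap hqK hwF) ht hn'
  refine ⟨fun p hp => cycleMatrix_mulVec_mem hQ hp, ⟨1, one_ne_zero, cycleMatrix_mulVec_e0⟩,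
    ⟨n, ne_zero_of_anisotropic hQ, cycleMatrix_mulVec_e3⟩, ?_⟩
  intro p hp hp0 hp3 p' hp' hp'0 hp'3
  obtain ⟨r, hr, rfl⟩ := exists_affinePoint_of_mem hQ hp hp0 hp3
  obtain ⟨r', hr', rfl⟩ := exists_affinePoint_of_mem hQ hp' hp'0 hp'3
  obtain ⟨k, hk⟩ := exists_cycleMatrix_pow_mulVec_eq hwF hw ht hn' hr hr'
  exact ⟨k, 1, one_ne_zero, by rw [one_smul]; exact hk⟩
end

section
/- The map P¹(F_{q²}) → E(F_q) induced by (x:y) ↦ μ_tw^{-1}(y^{q+1} : x y^q : x^q y : x^{q+1}) is a bijection between the q²+1 rational points of the projective line over F_{q²} and the q²+1 F_q-rational points of the elliptic quadric E. -/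
/-!
Since `ω ∉ F` and `|K| = |F|²`, every `x ∈ K` is uniquely `u + ω v` with `u, v ∈ F`.
The Frobenius `x ↦ x ^ q` is `F`-linear, so `x ^ q = u + ω ^ q v` and `x ^ (q + 1) = Q(u, v)`;
hence `μ_tw (1 : u : v : Q(u, v)) = (1 : x : x ^ q : x ^ (q + 1))`, while `μ_tw` fixes
`(0 : 0 : 0 : 1)`. Finally `det μ_tw = ω ^ q - ω ≠ 0`, because the elements of `K` fixed by the
Frobenius are those of `F` (Galois theory of finite fields).
-/

open FiniteField Matrix

section FiniteFieldExtension

variable {F K : Type*} [Field F] [Field K] [Algebra F K]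

theorem pow_card_ne_self_of_notMem_range [Fintype F] [Finite K] {ω : K}
    (hω : ω ∉ Set.range (algebraMap F K)) : ω ^ Fintype.card F ≠ ω := by
  refine fun hfix ↦ hω ((IsGalois.mem_range_algebraMap_iff_fixed ω).2 fun σ ↦ ?_)
  obtain ⟨n, rfl⟩ := (bijective_frobeniusAlgEquivOfAlgebraic_pow F K).2 σ
  rw [AlgEquiv.coe_pow, coe_frobeniusAlgEquivOfAlgebraic]
  exact Function.iterate_fixed hfix n

theorem algebraMap_add_mul_pow_card [Fintype F] (ω : K) (u v : F) :
    (algebraMap F K u + ω * algebraMap F K v) ^ Fintype.card F =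
      algebraMap F K u + ω ^ Fintype.card F * algebraMap F K v := by
  simp only [← frobeniusAlgHom_apply, map_add, map_mul, AlgHom.commutes]

theorem algebraMap_add_mul_injective {ω : K} (hω : ω ∉ Set.range (algebraMap F K)) :
    Function.Injective fun p : F × F ↦ algebraMap F K p.1 + ω * algebraMap F K p.2 := by
  rintro ⟨u, v⟩ ⟨u', v'⟩ h
  simp only at h
  obtain rfl : v = v' := by
    by_contra hv
    refine hω ⟨(u' - u) / (v - v'), ?_⟩
    have : algebraMap F K (v - v') ≠ 0 := by simpa [sub_eq_zero] using hv
    rw [map_div₀, div_eq_iff this, map_sub, map_sub]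
    linear_combination h.symm
  simpa using h

theorem algebraMap_add_mul_bijective [Fintype F] [Fintype K]
    (hK : Fintype.card K = Fintype.card F ^ 2) {ω : K} (hω : ω ∉ Set.range (algebraMap F K)) :
    Function.Bijective fun p : F × F ↦ algebraMap F K p.1 + ω * algebraMap F K p.2 :=
  (Fintype.bijective_iff_injective_and_card _).2
    ⟨algebraMap_add_mul_injective hω, by rw [Fintype.card_prod, hK, sq]⟩

theorem algebraMap_add_mul_pow_card_succ [Fintype F] {ω : K} {t n : F}
    (ht : algebraMap F K t = ω + ω ^ Fintype.card F)
    (hn : algebraMap F K n = ω ^ (Fintype.card F + 1)) (u v : F) :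
    (algebraMap F K u + ω * algebraMap F K v) ^ (Fintype.card F + 1) =
      algebraMap F K (u ^ 2 + t * u * v + n * v ^ 2) := by
  rw [pow_succ', algebraMap_add_mul_pow_card]
  simp only [map_add, map_mul, map_pow, ht, hn]
  ring

end FiniteFieldExtension

section TwistMatrix

variable {R : Type*} [CommRing R]

def twistMatrix (a b : R) : Matrix (Fin 4) (Fin 4) R :=
  !![1, 0, 0, 0; 0, 1, a, 0; 0, 1, b, 0; 0, 0, 0, 1]

theorem twistMatrix_mulVec (a b : R) (w : Fin 4 → R) :
    twistMatrix a b *ᵥ w = ![w 0, w 1 + a * w 2, w 1 + b * w 2, w 3] := by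
  ext i
  fin_cases i <;> simp [twistMatrix, vecHead, vecTail]

theorem det_twistMatrix (a b : R) : (twistMatrix a b).det = b - a := by
  simp [twistMatrix, Matrix.det_succ_row_zero, Fin.sum_univ_succ]
  ring

end TwistMatrix

/-- The map `P¹(F_{q²}) → E(F_q)` induced by
`(x:y) ↦ μ_tw⁻¹ (y^{q+1} : x y^q : x^q y : x^{q+1})` is a bijection between the
`q²+1` rational points of the projective line over `F_{q²}` and the `q²+1`
`F_q`-rational points of the elliptic quadric `E : x₀x₃ = Q(x₁,x₂)`, where
`Q(u,v) = (u+ωv)(u+ω^q v)` and `μ_tw` has matrix rows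
`(1,0,0,0),(0,1,ω,0),(0,1,ω^q,0),(0,0,0,1)`. -/
theorem stmt_12 (F K : Type) [Field F] [Field K] [Algebra F K]
    [Fintype F] [Fintype K] (q : ℕ)
    (hqF : Fintype.card F = q) (hqK : Fintype.card K = q ^ 2)
    (ω : K) (hω : ω ∉ Set.range (algebraMap F K))
    (t n : F) (ht : algebraMap F K t = ω + ω ^ q)
    (hn : algebraMap F K n = ω ^ (q + 1)) :
    let A : Matrix (Fin 4) (Fin 4) K :=
      !![1, 0, 0, 0; 0, 1, ω, 0; 0, 1, ω ^ q, 0; 0, 0, 0, 1]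
    -- the twisted embedding ψ on the points of P¹(F_{q²}): (x:1) and (1:0)
    let ψ : Option K → (Fin 4 → K) := fun o =>
      o.elim ![0, 0, 0, 1] fun x => ![1, x, x ^ q, x ^ (q + 1)]
    let Φ : Option K → (Fin 4 → K) := fun p => A⁻¹.mulVec (ψ p)
    let Qf : F → F → F := fun u v => u ^ 2 + t * u * v + n * v ^ 2
    Function.Injective Φ ∧
    Set.range Φ = {pt : Fin 4 → K | ∃ u v : F, pt = ![1, algebraMap F K u,
        algebraMap F K v, algebraMap F K (Qf u v)]} ∪ {![0, 0, 0, 1]} := by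
  intro A ψ Φ Qf
  subst hqF
  have hA_eq : A = twistMatrix ω (ω ^ Fintype.card F) := rfl
  have hA : IsUnit A := A.isUnit_iff_isUnit_det.2 <| by
    rw [hA_eq, det_twistMatrix]
    exact (sub_ne_zero.2 (pow_card_ne_self_of_notMem_range hω)).isUnit
  let := A.invertibleOfIsUnitDet (A.isUnit_iff_isUnit_det.1 hA)
  have hΦ (o : Option K) (w : Fin 4 → K)
      (h : ψ o = twistMatrix ω (ω ^ Fintype.card F) *ᵥ w) : Φ o = w :=
    inv_mulVec_eq_vec (hA_eq ▸ h)
  have hval (u v : F) : Φ (some (algebraMap F K u + ω * algebraMap F K v)) =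
      ![1, algebraMap F K u, algebraMap F K v, algebraMap F K (Qf u v)] := by
    refine hΦ _ _ ?_
    ext i
    fin_cases i <;>
      simp [ψ, Qf, twistMatrix_mulVec, algebraMap_add_mul_pow_card,
        algebraMap_add_mul_pow_card_succ ht hn]
  have hnone : Φ none = ![0, 0, 0, 1] := by
    refine hΦ _ _ ?_
    ext i
    fin_cases i <;> simp [ψ, twistMatrix_mulVec]
  have hψ : Function.Injective ψ :=
    Option.injective_iff.2 ⟨fun x y h ↦ by simpa [ψ] using congrFun h 1,
      fun ⟨x, hx⟩ ↦ by simpa [ψ] using congrFun hx 0⟩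
  refine ⟨(mulVec_injective_iff_isUnit.2 (isUnit_nonsing_inv_iff.2 hA)).comp hψ, ?_⟩
  rw [Option.range_eq, hnone, Set.union_singleton]
  congr 1
  ext pt
  constructor
  · rintro ⟨x, rfl⟩
    obtain ⟨⟨u, v⟩, rfl⟩ := (algebraMap_add_mul_bijective hqK hω).2 x
    exact ⟨u, v, hval u v⟩
  · rintro ⟨u, v, rfl⟩
    exact ⟨_, hval u v⟩
end
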